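/- arXiv:1306.0248 — 4 statements merged into one kernel-verified Lean document; each statement's English description precedes it below -/
import Mathlib

section
/- Let −a < x_{−n} < … < x_{−1} < x_0 < x_1 < … < x_n < a, let μ_{−n}, …, μ_n be real numbers with ∑_{k=−n}^{n} μ_k = 0, and for l = 1, 2, … define Ψ_{2l−1} on [−a, a] by Ψ_{2l−1}(x) = ((4a)^(2l−1)/(2l)!) · ∑_{k=−n}^{n} μ_k · ( B_{2l}(1/2 + (x + x_k)/(4a)) + B_{2l}({(x − x_k)/(4a)}) ), where B_{2l} is the Bernoulli polynomial of degree 2l and {·} denotes the fractional part. Then for every f ∈ C^{2m}[−a, a] with m ≥ 1, the identity ∑_{k=−n}^{n} μ_k f(x_k) = ∑_{k=1}^{m} f^(2k−1)(a) Ψ_{2k−1}(a) − ∑_{k=1}^{m} f^(2k−1)(−a) Ψ_{2k−1}(−a) − ∫_{−a}^{a} f^(2m)(x) Ψ_{2m−1}(x) dx holds. -/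
open Real Set Finset intervalIntegral

/-- Real evaluation of the Bernoulli polynomial `B_n` at `x`. -/
noncomputable def bernoulliPolyEval (n : ℕ) (x : ℝ) : ℝ :=
  Polynomial.aeval x (Polynomial.bernoulli n)


open MeasureTheory

lemma bpe_eq (n : ℕ) (x : ℝ) : bernoulliPolyEval n x = bernoulliFun n x := by
  rw [bernoulliPolyEval, bernoulliFun, Polynomial.eval_map, Polynomial.aeval_def]

lemma bernoulliFun_one_sub (n : ℕ) (x : ℝ) :
    bernoulliFun n (1 - x) = (-1 : ℝ) ^ n * bernoulliFun n x := by
  induction n generalizing x with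
  | zero => simp [bernoulliFun]
  | succ n ih =>
    -- the difference has zero derivative and vanishes at 0
    set g : ℝ → ℝ := fun x => bernoulliFun (n+1) (1 - x) - (-1 : ℝ) ^ (n+1) * bernoulliFun (n+1) x with hg
    have hderiv : ∀ y : ℝ, HasDerivAt g 0 y := by
      intro y
      have h1 : HasDerivAt (fun x : ℝ => bernoulliFun (n+1) (1 - x))
          (((n+1 : ℕ) * bernoulliFun n (1 - y)) * (-1)) y := by
        have := (hasDerivAt_bernoulliFun (n+1) (1 - y)).comp y
          ((hasDerivAt_id y).const_sub 1)
        simpa [Function.comp_def] using this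
      have h2 : HasDerivAt (fun x : ℝ => (-1 : ℝ) ^ (n+1) * bernoulliFun (n+1) x)
          ((-1 : ℝ) ^ (n+1) * ((n+1 : ℕ) * bernoulliFun n y)) y :=
        (hasDerivAt_bernoulliFun (n+1) y).const_mul _
      have := h1.sub h2
      exact this.congr_deriv (by rw [ih y]; ring)
    have hconst : ∀ y : ℝ, g y = g 0 := by
      intro y
      have : ∀ z : ℝ, deriv g z = 0 := fun z => (hderiv z).deriv
      exact is_const_of_deriv_eq_zero (fun z => (hderiv z).differentiableAt) this y 0
    have h0 : g 0 = 0 := by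
      simp only [hg, sub_zero]
      rw [bernoulliFun_eval_one]
      rcases Nat.even_or_odd (n+1) with he | ho
      · rw [if_neg (by intro h; rw [h] at he; simp at he), Even.neg_one_pow he, add_zero,
          one_mul, sub_self]
      · rcases eq_or_ne (n+1) 1 with h1 | h1
        · rw [h1, if_pos rfl, pow_one, bernoulliFun_eval_zero, bernoulli_one]
          push_cast; ring
        · rw [if_neg h1, add_zero, Odd.neg_one_pow ho, bernoulliFun_eval_zero,
            bernoulli_eq_bernoulli'_of_ne_one h1,
            bernoulli'_eq_zero_of_odd ho (by omega)]
          simp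
    have hgx := hconst x
    rw [h0] at hgx
    have : bernoulliFun (n+1) (1 - x) - (-1 : ℝ) ^ (n+1) * bernoulliFun (n+1) x = 0 := hgx
    linarith [this]

lemma bernoulliFun_zero' (x : ℝ) : bernoulliFun 0 x = 1 := by
  simp [bernoulliFun]

/-- smooth version with explicit branch shift ε -/
noncomputable def Qf (a t ε : ℝ) (j : ℕ) (y : ℝ) : ℝ :=
  bernoulliFun j (1/2 + (y + t)/(4*a)) + bernoulliFun j ((y - t)/(4*a) + ε)

/-- the actual (periodized) version -/
noncomputable def Qc (a t : ℝ) (j : ℕ) (y : ℝ) : ℝ :=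
  bernoulliFun j (1/2 + (y + t)/(4*a)) + bernoulliFun j (Int.fract ((y - t)/(4*a)))

lemma continuous_Qf (a t ε : ℝ) (j : ℕ) : Continuous (Qf a t ε j) := by
  apply Continuous.add
  · exact (continuous_bernoulliFun j).comp (by continuity)
  · exact (continuous_bernoulliFun j).comp (by continuity)

lemma continuous_Qc (a t : ℝ) {j : ℕ} (hj : j ≠ 1) : Continuous (Qc a t j) := by
  apply Continuous.add
  · exact (continuous_bernoulliFun j).comp (by continuity)
  · have h1 : Continuous fun u : ℝ => bernoulliFun j (Int.fract u) :=
      ContinuousOn.comp_fract'' ((continuous_bernoulliFun j).continuousOn)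
        (bernoulliFun_endpoints_eq_of_ne_one hj).symm
    exact h1.comp (by continuity)

lemma hasDerivAt_Qf (a t ε : ℝ) (j : ℕ) (y : ℝ) :
    HasDerivAt (Qf a t ε (j+1)) (((j:ℝ)+1)/(4*a) * Qf a t ε j y) y := by
  have inner1 : HasDerivAt (fun y : ℝ => 1/2 + (y + t)/(4*a)) (1/(4*a)) y := by
    have := (((hasDerivAt_id y).add_const t).div_const (4*a)).const_add (1/2 : ℝ)
    simpa using this
  have inner2 : HasDerivAt (fun y : ℝ => (y - t)/(4*a) + ε) (1/(4*a)) y := by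
    have := (((hasDerivAt_id y).sub_const t).div_const (4*a)).add_const ε
    simpa using this
  have h1 := (hasDerivAt_bernoulliFun (j+1) (1/2 + (y + t)/(4*a))).comp y inner1
  have h2 := (hasDerivAt_bernoulliFun (j+1) ((y - t)/(4*a) + ε)).comp y inner2
  have h := h1.add h2
  exact h.congr_deriv (by
    simp only [Nat.add_sub_cancel, Qf]
    push_cast
    ring)


lemma Qc_eq_left {a t y : ℝ} (ha : 0 < a) (hta : t < a) (hy : y ∈ Icc (-a) t)
    {j : ℕ} (hj : j ≠ 1) : Qc a t j y = Qf a t 1 j y := by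
  unfold Qc Qf
  congr 1
  set u := (y - t)/(4*a) with hu
  have hu0 : u ≤ 0 := by
    apply div_nonpos_of_nonpos_of_nonneg <;> [linarith [hy.2]; linarith]
  have hu1 : -1 < u := by
    rw [hu, show (-1 : ℝ) = (-(4*a))/(4*a) by field_simp]
    apply div_lt_div_of_pos_right ?_ (by linarith)
    linarith [hy.1]
  rcases lt_or_eq_of_le hu0 with h | h
  · have : Int.fract u = u + 1 := by
      rw [show u + 1 = 1 + u by ring, ← Int.fract_intCast_add (1 : ℤ)]
      rw [Int.fract_eq_self.mpr ⟨by push_cast; linarith, by push_cast; linarith⟩]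
      push_cast; ring
    rw [this]
  · rw [h, Int.fract_zero, show (0:ℝ) + 1 = 1 by ring,
      bernoulliFun_endpoints_eq_of_ne_one hj]

lemma Qc_eq_right {a t y : ℝ} (ha : 0 < a) (hat : -a < t) (hy : y ∈ Icc t a) (j : ℕ) :
    Qc a t j y = Qf a t 0 j y := by
  unfold Qc Qf
  congr 1
  set u := (y - t)/(4*a) with hu
  have hu0 : 0 ≤ u := by
    apply div_nonneg <;> linarith [hy.1]
  have hu1 : u < 1 := by
    rw [hu, show (1 : ℝ) = (4*a)/(4*a) by field_simp]
    apply div_lt_div_of_pos_right ?_ (by linarith)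
    linarith [hy.2]
  rw [Int.fract_eq_self.mpr ⟨hu0, hu1⟩, add_zero]

lemma Qf_vanish_right {a t : ℝ} (ha : a ≠ 0) {j : ℕ} (hj : Odd j) : Qf a t 0 j a = 0 := by
  unfold Qf
  have harg : 1/2 + (a + t)/(4*a) = 1 - ((a - t)/(4*a) + 0) := by
    field_simp; ring
  rw [harg, bernoulliFun_one_sub, Odd.neg_one_pow hj]
  ring

lemma Qf_vanish_left {a t : ℝ} (ha : a ≠ 0) {j : ℕ} (hj : Odd j) : Qf a t 1 j (-a) = 0 := by
  unfold Qf
  have harg : 1/2 + (-a + t)/(4*a) = 1 - ((-a - t)/(4*a) + 1) := by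
    field_simp; ring
  rw [harg, bernoulliFun_one_sub, Odd.neg_one_pow hj]
  ring


lemma ibp2 (a t ε : ℝ) (j : ℕ) (r : ℝ) {c d : ℝ} (hcd : c ≤ d)
    {u u₁ u₂ : ℝ → ℝ}
    (hu : ContinuousOn u (Icc c d)) (hu₁ : ContinuousOn u₁ (Icc c d))
    (hu₂ : ContinuousOn u₂ (Icc c d))
    (hdu : ∀ y ∈ Ioo c d, HasDerivAt u (u₁ y) y)
    (hdu₁ : ∀ y ∈ Ioo c d, HasDerivAt u₁ (u₂ y) y) :
    ∫ y in c..d, u₂ y * (r * Qf a t ε (j+2) y)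
      = ((u₁ d * (r * Qf a t ε (j+2) d) - u d * (r * ((j:ℝ)+2) / (4*a) * Qf a t ε (j+1) d))
      - (u₁ c * (r * Qf a t ε (j+2) c) - u c * (r * ((j:ℝ)+2) / (4*a) * Qf a t ε (j+1) c)))
      + ∫ y in c..d, u y * (r * ((j:ℝ)+2) * ((j:ℝ)+1) / (16*a^2) * Qf a t ε j y) := by
  set g : ℝ → ℝ := fun y =>
    u₁ y * (r * Qf a t ε (j+2) y) - u y * (r * ((j:ℝ)+2) / (4*a) * Qf a t ε (j+1) y) with hg
  set g' : ℝ → ℝ := fun y =>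
    u₂ y * (r * Qf a t ε (j+2) y) - u y * (r * ((j:ℝ)+2) * ((j:ℝ)+1) / (16*a^2) * Qf a t ε j y)
    with hg'
  have hint1 : IntervalIntegrable (fun y => u₂ y * (r * Qf a t ε (j+2) y)) volume c d := by
    apply ContinuousOn.intervalIntegrable
    rw [uIcc_of_le hcd]
    exact hu₂.mul (continuous_const.mul (continuous_Qf a t ε (j+2))).continuousOn
  have hint2 : IntervalIntegrable
      (fun y => u y * (r * ((j:ℝ)+2) * ((j:ℝ)+1) / (16*a^2) * Qf a t ε j y)) volume c d := by
    apply ContinuousOn.intervalIntegrable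
    rw [uIcc_of_le hcd]
    exact hu.mul (continuous_const.mul (continuous_Qf a t ε j)).continuousOn
  have hgcont : ContinuousOn g (Icc c d) := by
    apply ContinuousOn.sub
    · exact hu₁.mul (continuous_const.mul (continuous_Qf a t ε (j+2))).continuousOn
    · exact hu.mul (continuous_const.mul (continuous_Qf a t ε (j+1))).continuousOn
  have hgderiv : ∀ y ∈ Ioo c d, HasDerivWithinAt g (g' y) (Ioi y) y := by
    intro y hy
    apply HasDerivAt.hasDerivWithinAt
    have dQ2 : HasDerivAt (fun z => r * Qf a t ε (j+2) z)
        (r * (((j:ℝ)+1+1)/(4*a) * Qf a t ε (j+1) y)) y := by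
      have := (hasDerivAt_Qf a t ε (j+1) y).const_mul r
      simpa using this
    have dQ1 : HasDerivAt (fun z => r * ((j:ℝ)+2) / (4*a) * Qf a t ε (j+1) z)
        (r * ((j:ℝ)+2) / (4*a) * (((j:ℝ)+1)/(4*a) * Qf a t ε j y)) y :=
      (hasDerivAt_Qf a t ε j y).const_mul _
    have h1 := (hdu₁ y hy).mul dQ2
    have h2 := (hdu y hy).mul dQ1
    have h := h1.sub h2
    exact h.congr_deriv (by rw [hg']; ring)
  have hFTC := integral_eq_sub_of_hasDeriv_right_of_le hcd hgcont hgderiv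
    (hint1.sub hint2)
  have : (∫ y in c..d, u₂ y * (r * Qf a t ε (j+2) y))
      - ∫ y in c..d, u y * (r * ((j:ℝ)+2) * ((j:ℝ)+1) / (16*a^2) * Qf a t ε j y)
      = g d - g c := by
    rw [← intervalIntegral.integral_sub hint1 hint2]
    exact hFTC
  rw [hg] at this
  linarith [this]


lemma master {a t : ℝ} (ha : 0 < a) (ht : t ∈ Ioo (-a) a) {j : ℕ} (hje : Even j) (r : ℝ)
    {u u₁ u₂ : ℝ → ℝ}
    (hu : ContinuousOn u (Icc (-a) a)) (hu₁ : ContinuousOn u₁ (Icc (-a) a))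
    (hu₂ : ContinuousOn u₂ (Icc (-a) a))
    (hdu : ∀ y ∈ Ioo (-a) a, HasDerivAt u (u₁ y) y)
    (hdu₁ : ∀ y ∈ Ioo (-a) a, HasDerivAt u₁ (u₂ y) y) :
    ∫ y in (-a)..a, u₂ y * (r * Qc a t (j+2) y)
      = u₁ a * (r * Qc a t (j+2) a) - u₁ (-a) * (r * Qc a t (j+2) (-a))
        - u t * (r * ((j:ℝ)+2) / (4*a) * (bernoulliFun (j+1) 1 - bernoulliFun (j+1) 0))
        + ((∫ y in (-a)..t, u y * (r * ((j:ℝ)+2) * ((j:ℝ)+1) / (16*a^2) * Qf a t 1 j y))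
          + ∫ y in t..a, u y * (r * ((j:ℝ)+2) * ((j:ℝ)+1) / (16*a^2) * Qf a t 0 j y)) := by
  obtain ⟨hat, hta⟩ := ht
  have h2 : (j + 2 : ℕ) ≠ 1 := by omega
  have hIccL : Icc (-a) t ⊆ Icc (-a) a := Icc_subset_Icc le_rfl hta.le
  have hIccR : Icc t a ⊆ Icc (-a) a := Icc_subset_Icc hat.le le_rfl
  have hIooL : Ioo (-a) t ⊆ Ioo (-a) a := Ioo_subset_Ioo le_rfl hta.le
  have hIooR : Ioo t a ⊆ Ioo (-a) a := Ioo_subset_Ioo hat.le le_rfl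
  -- split the integral
  have hsplit :
      (∫ y in (-a)..a, u₂ y * (r * Qc a t (j+2) y))
        = (∫ y in (-a)..t, u₂ y * (r * Qc a t (j+2) y))
          + ∫ y in t..a, u₂ y * (r * Qc a t (j+2) y) := by
    symm
    apply intervalIntegral.integral_add_adjacent_intervals
    · apply ContinuousOn.intervalIntegrable
      rw [uIcc_of_le hat.le]
      exact ((hu₂.mono hIccL).mul
        (continuous_const.mul (continuous_Qc a t h2)).continuousOn)
    · apply ContinuousOn.intervalIntegrable
      rw [uIcc_of_le hta.le]
      exact ((hu₂.mono hIccR).mul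
        (continuous_const.mul (continuous_Qc a t h2)).continuousOn)
  have hcongrL : (∫ y in (-a)..t, u₂ y * (r * Qc a t (j+2) y))
      = ∫ y in (-a)..t, u₂ y * (r * Qf a t 1 (j+2) y) := by
    apply intervalIntegral.integral_congr
    intro y hy
    rw [uIcc_of_le hat.le] at hy
    dsimp only
    rw [Qc_eq_left ha hta hy h2]
  have hcongrR : (∫ y in t..a, u₂ y * (r * Qc a t (j+2) y))
      = ∫ y in t..a, u₂ y * (r * Qf a t 0 (j+2) y) := by
    apply intervalIntegral.integral_congr
    intro y hy
    rw [uIcc_of_le hta.le] at hy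
    dsimp only
    rw [Qc_eq_right ha hat hy]
  have hL := ibp2 a t 1 j r hat.le (hu.mono hIccL) (hu₁.mono hIccL) (hu₂.mono hIccL)
    (fun y hy => hdu y (hIooL hy)) (fun y hy => hdu₁ y (hIooL hy))
  have hR := ibp2 a t 0 j r hta.le (hu.mono hIccR) (hu₁.mono hIccR) (hu₂.mono hIccR)
    (fun y hy => hdu y (hIooR hy)) (fun y hy => hdu₁ y (hIooR hy))
  rw [hsplit, hcongrL, hcongrR, hL, hR]
  -- boundary simplifications
  have e1 : Qc a t (j+2) a = Qf a t 0 (j+2) a :=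
    Qc_eq_right ha hat ⟨hta.le, le_rfl⟩ _
  have e2 : Qc a t (j+2) (-a) = Qf a t 1 (j+2) (-a) :=
    Qc_eq_left ha hta ⟨le_rfl, hat.le⟩ h2
  have e3 : Qf a t 0 (j+1) a = 0 := Qf_vanish_right ha.ne' (Even.add_one hje)
  have e4 : Qf a t 1 (j+1) (-a) = 0 := Qf_vanish_left ha.ne' (Even.add_one hje)
  have e5 : Qf a t 1 (j+2) t = Qf a t 0 (j+2) t := by
    unfold Qf
    rw [sub_self, zero_div, zero_add, add_zero, bernoulliFun_endpoints_eq_of_ne_one h2]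
  have e6 : Qf a t 1 (j+1) t - Qf a t 0 (j+1) t
      = bernoulliFun (j+1) 1 - bernoulliFun (j+1) 0 := by
    unfold Qf
    rw [sub_self, zero_div, zero_add, add_zero]
    ring
  rw [e1, e2, e3, e4, e5]
  have e6' : Qf a t 1 (j+1) t
      = bernoulliFun (j+1) 1 - bernoulliFun (j+1) 0 + Qf a t 0 (j+1) t := by
    linarith [e6]
  rw [e6']
  ring


lemma itD_deriv {a : ℝ} (ha : 0 < a) {f : ℝ → ℝ} {N : ℕ}
    (hf : ContDiffOn ℝ N f (Icc (-a) a)) {i : ℕ} (hi : i < N) :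
    ∀ y ∈ Ioo (-a) a, HasDerivAt (iteratedDerivWithin i f (Icc (-a) a))
      (iteratedDerivWithin (i+1) f (Icc (-a) a) y) y := by
  intro y hy
  have hU : UniqueDiffOn ℝ (Icc (-a) a) := uniqueDiffOn_Icc (by linarith [hy.1, hy.2])
  have hyI : y ∈ Icc (-a) a := Ioo_subset_Icc_self hy
  have hdiff := hf.differentiableOn_iteratedDerivWithin
    (show (i : WithTop ℕ∞) < N by exact_mod_cast hi) hU
  have h1 : HasDerivWithinAt (iteratedDerivWithin i f (Icc (-a) a))
      (derivWithin (iteratedDerivWithin i f (Icc (-a) a)) (Icc (-a) a) y) (Icc (-a) a) y :=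
    (hdiff y hyI).hasDerivWithinAt
  have h2 := h1.hasDerivAt (Icc_mem_nhds hy.1 hy.2)
  rwa [← iteratedDerivWithin_succ] at h2

lemma itD_cont {a : ℝ} (ha : 0 < a) {f : ℝ → ℝ} {N : ℕ}
    (hf : ContDiffOn ℝ N f (Icc (-a) a)) {i : ℕ} (hi : i ≤ N) :
    ContinuousOn (iteratedDerivWithin i f (Icc (-a) a)) (Icc (-a) a) :=
  hf.continuousOn_iteratedDerivWithin (by exact_mod_cast hi)
    (uniqueDiffOn_Icc (by linarith))


lemma EM_pointwise {a : ℝ} (ha : 0 < a) {t : ℝ} (ht : t ∈ Ioo (-a) a) (m : ℕ) (hm : 1 ≤ m) :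
    ∀ f : ℝ → ℝ, ContDiffOn ℝ ((2*m : ℕ) : ℕ∞) f (Icc (-a) a) →
    f t = (∑ k ∈ Finset.Icc 1 m, iteratedDerivWithin (2*k-1) f (Icc (-a) a) a *
            ((4*a)^(2*k-1)/((Nat.factorial (2*k)):ℝ) * Qc a t (2*k) a))
        - (∑ k ∈ Finset.Icc 1 m, iteratedDerivWithin (2*k-1) f (Icc (-a) a) (-a) *
            ((4*a)^(2*k-1)/((Nat.factorial (2*k)):ℝ) * Qc a t (2*k) (-a)))
        - (∫ y in (-a)..a, iteratedDerivWithin (2*m) f (Icc (-a) a) y *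
            ((4*a)^(2*m-1)/((Nat.factorial (2*m)):ℝ) * Qc a t (2*m) y))
        + (1/(2*a)) * ∫ y in (-a)..a, f y := by
  induction m, hm using Nat.le_induction with
  | base =>
    intro f hf
    have haa : -a < a := by linarith [ht.1, ht.2]
    have hM := master ha ht (Even.zero) (2*a)
      (itD_cont ha hf (by omega) : ContinuousOn (iteratedDerivWithin 0 f (Icc (-a) a)) (Icc (-a) a))
      (itD_cont ha hf (by omega) : ContinuousOn (iteratedDerivWithin 1 f (Icc (-a) a)) (Icc (-a) a))
      (itD_cont ha hf (by omega) : ContinuousOn (iteratedDerivWithin 2 f (Icc (-a) a)) (Icc (-a) a))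
      (itD_deriv ha hf (by omega))
      (itD_deriv ha hf (by omega))
    have hfc : ContinuousOn f (Icc (-a) a) := hf.continuousOn
    norm_num at hM
    have hQf0 : ∀ ε y : ℝ, Qf a t ε 0 y = 2 := by
      intro ε y; unfold Qf; rw [bernoulliFun_zero', bernoulliFun_zero']; norm_num
    -- simplify the jump term
    have hB1 : bernoulliFun 1 1 - bernoulliFun 1 0 = 1 := by
      rw [bernoulliFun_eval_one]; norm_num
    -- piece integrals
    have e1 : (∫ y in (-a)..t, f y * (2 * a * 2 / (16 * a ^ 2) * Qf a t 1 0 y))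
        = ∫ y in (-a)..t, f y * (1/(2*a)) := by
      apply intervalIntegral.integral_congr
      intro y hy
      simp only [iteratedDerivWithin_zero, hQf0]
      field_simp
      ring
    have e2 : (∫ y in t..a, f y * (2 * a * 2 / (16 * a ^ 2) * Qf a t 0 0 y))
        = ∫ y in t..a, f y * (1/(2*a)) := by
      apply intervalIntegral.integral_congr
      intro y hy
      simp only [iteratedDerivWithin_zero, hQf0]
      field_simp
      ring
    have hint1 : IntervalIntegrable (fun y => f y * (1/(2*a))) volume (-a) t := by
      apply ContinuousOn.intervalIntegrable
      rw [uIcc_of_le ht.1.le]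
      exact (hfc.mono (Icc_subset_Icc le_rfl ht.2.le)).mul continuousOn_const
    have hint2 : IntervalIntegrable (fun y => f y * (1/(2*a))) volume t a := by
      apply ContinuousOn.intervalIntegrable
      rw [uIcc_of_le ht.2.le]
      exact (hfc.mono (Icc_subset_Icc ht.1.le le_rfl)).mul continuousOn_const
    have e3 : (∫ y in (-a)..t, f y * (1/(2*a))) + ∫ y in t..a, f y * (1/(2*a))
        = (1/(2*a)) * ∫ y in (-a)..a, f y := by
      rw [intervalIntegral.integral_add_adjacent_intervals hint1 hint2,
        intervalIntegral.integral_mul_const]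
      ring
    rw [e1, e2, e3] at hM
    -- now identify with the goal
    have hgoal1 : ∀ y : ℝ, ((4*a)^((1:ℕ))/((Nat.factorial 2):ℝ) * Qc a t 2 y)
        = 2*a * Qc a t 2 y := by
      intro y
      rw [pow_one, show ((Nat.factorial 2 : ℕ) : ℝ) = 2 by norm_num [Nat.factorial]]
      ring
    rw [Finset.Icc_self, Finset.sum_singleton, Finset.sum_singleton]
    simp only [show (2*1-1 : ℕ) = 1 from rfl, show (2*1 : ℕ) = 2 from rfl]
    simp only [hgoal1]
    have hja : 2 * a * 2 / (4 * a) * 1 = 1 := by field_simp; ring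
    rw [mul_one] at hja; rw [hja, mul_one] at hM
    simp only [iteratedDerivWithin_one]
    linarith [hM]
  | succ m hm ih =>
    intro f hf
    have haa : -a < a := by linarith [ht.1, ht.2]
    have ha' : a ≠ 0 := ha.ne'
    have hf' : ContDiffOn ℝ ((2*m : ℕ) : ℕ∞) f (Icc (-a) a) :=
      hf.of_le (by exact_mod_cast Nat.cast_le.mpr (show 2*m ≤ 2*(m+1) by omega))
    have hP := ih f hf'
    have hM := master ha ht (j := 2*m) (even_two_mul m)
      ((4*a)^(2*m+1)/((Nat.factorial (2*m+2)):ℝ))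
      (itD_cont ha hf (by omega) :
        ContinuousOn (iteratedDerivWithin (2*m) f (Icc (-a) a)) (Icc (-a) a))
      (itD_cont ha hf (by omega) :
        ContinuousOn (iteratedDerivWithin (2*m+1) f (Icc (-a) a)) (Icc (-a) a))
      (itD_cont ha hf (by omega) :
        ContinuousOn (iteratedDerivWithin (2*m+2) f (Icc (-a) a)) (Icc (-a) a))
      (itD_deriv ha hf (by omega))
      (itD_deriv ha hf (by omega))
    -- the jump term vanishes
    have hB : bernoulliFun (2*m+1) 1 - bernoulliFun (2*m+1) 0 = 0 := by
      rw [bernoulliFun_endpoints_eq_of_ne_one (by omega), sub_self]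
    rw [hB] at hM
    -- constant identification
    have hfac0 : ((Nat.factorial (2*m)) : ℝ) ≠ 0 :=
      Nat.cast_ne_zero.mpr (Nat.factorial_ne_zero _)
    have hfac2 : ((Nat.factorial (2*m+2)) : ℝ)
        = (((2*m:ℕ):ℝ)+2) * (((2*m:ℕ):ℝ)+1) * ((Nat.factorial (2*m)) : ℝ) := by
      rw [show 2*m+2 = (2*m+1)+1 from rfl, Nat.factorial_succ, Nat.factorial_succ]
      push_cast; ring
    have hpow : (4*a)^(2*m+1) = (4*a)^(2*m-1) * (4*a)^2 := by
      rw [← pow_add]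
      congr 1
      omega
    have hs' : ∀ b q : ℝ, b * ((4*a)^(2*m+1)/((Nat.factorial (2*m+2)):ℝ)
          * (((2*m:ℕ):ℝ)+2) * (((2*m:ℕ):ℝ)+1) / (16*a^2) * q)
        = b * ((4*a)^(2*m-1)/((Nat.factorial (2*m)):ℝ) * q) := by
      intro b q
      rw [hfac2, hpow]
      have h21 : (((2*m:ℕ):ℝ)+1) ≠ 0 := by positivity
      have h22 : (((2*m:ℕ):ℝ)+2) ≠ 0 := by positivity
      field_simp
      ring
    -- convert piece integrands to the Qc form
    have h2m1 : (2*m : ℕ) ≠ 1 := by omega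
    have eL : (∫ y in (-a)..t, iteratedDerivWithin (2*m) f (Icc (-a) a) y *
          ((4*a)^(2*m+1)/((Nat.factorial (2*m+2)):ℝ)
            * (((2*m:ℕ):ℝ)+2) * (((2*m:ℕ):ℝ)+1) / (16*a^2) * Qf a t 1 (2*m) y))
        = ∫ y in (-a)..t, iteratedDerivWithin (2*m) f (Icc (-a) a) y *
          ((4*a)^(2*m-1)/((Nat.factorial (2*m)):ℝ) * Qc a t (2*m) y) := by
      apply intervalIntegral.integral_congr
      intro y hy
      rw [uIcc_of_le ht.1.le] at hy
      dsimp only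
      rw [Qc_eq_left ha ht.2 hy h2m1, hs']
    have eR : (∫ y in t..a, iteratedDerivWithin (2*m) f (Icc (-a) a) y *
          ((4*a)^(2*m+1)/((Nat.factorial (2*m+2)):ℝ)
            * (((2*m:ℕ):ℝ)+2) * (((2*m:ℕ):ℝ)+1) / (16*a^2) * Qf a t 0 (2*m) y))
        = ∫ y in t..a, iteratedDerivWithin (2*m) f (Icc (-a) a) y *
          ((4*a)^(2*m-1)/((Nat.factorial (2*m)):ℝ) * Qc a t (2*m) y) := by
      apply intervalIntegral.integral_congr
      intro y hy
      rw [uIcc_of_le ht.2.le] at hy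
      dsimp only
      rw [Qc_eq_right ha ht.1 hy, hs']
    rw [eL, eR] at hM
    -- glue the two pieces
    have hcont2m : ContinuousOn (fun y => iteratedDerivWithin (2*m) f (Icc (-a) a) y *
        ((4*a)^(2*m-1)/((Nat.factorial (2*m)):ℝ) * Qc a t (2*m) y)) (Icc (-a) a) :=
      (itD_cont ha hf (by omega)).mul
        (continuous_const.mul (continuous_Qc a t h2m1)).continuousOn
    have hglue : (∫ y in (-a)..t, iteratedDerivWithin (2*m) f (Icc (-a) a) y *
          ((4*a)^(2*m-1)/((Nat.factorial (2*m)):ℝ) * Qc a t (2*m) y))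
        + (∫ y in t..a, iteratedDerivWithin (2*m) f (Icc (-a) a) y *
          ((4*a)^(2*m-1)/((Nat.factorial (2*m)):ℝ) * Qc a t (2*m) y))
        = ∫ y in (-a)..a, iteratedDerivWithin (2*m) f (Icc (-a) a) y *
          ((4*a)^(2*m-1)/((Nat.factorial (2*m)):ℝ) * Qc a t (2*m) y) := by
      apply intervalIntegral.integral_add_adjacent_intervals
      · apply ContinuousOn.intervalIntegrable
        rw [uIcc_of_le ht.1.le]
        exact hcont2m.mono (Icc_subset_Icc le_rfl ht.2.le)
      · apply ContinuousOn.intervalIntegrable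
        rw [uIcc_of_le ht.2.le]
        exact hcont2m.mono (Icc_subset_Icc ht.1.le le_rfl)
    rw [hglue] at hM
    -- rewrite the goal indices and split the sums
    simp only [show (2*(m+1) : ℕ) = 2*m+2 from by ring, show (2*(m+1)-1 : ℕ) = 2*m+1 from by omega]
    rw [Finset.sum_Icc_succ_top (by omega : 1 ≤ m+1), Finset.sum_Icc_succ_top (by omega : 1 ≤ m+1)]
    simp only [show (2*(m+1) : ℕ) = 2*m+2 from by ring, show (2*(m+1)-1 : ℕ) = 2*m+1 from by omega,
      show (2*m+2-1 : ℕ) = 2*m+1 from by omega]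
    linarith [hP, hM]

/-- **Lemma 1 of the paper.** For `−a < x₋ₙ < … < x₀ < … < xₙ < a`,
coefficients `μₖ` with `∑ μₖ = 0`, and `Ψ_{2l−1}` built from Bernoulli polynomials, every
`f ∈ C^{2m}[−a,a]` (`m ≥ 1`) satisfies the quadrature identity. -/
theorem key_identity
    (n : ℕ) (a : ℝ) (ha : 0 < a) (x : ℤ → ℝ) (μ : ℤ → ℝ)
    (hxa : -a < x (-(n : ℤ))) (hxb : x n < a)
    (hmono : ∀ j ∈ Finset.Icc (-(n : ℤ)) n, ∀ k ∈ Finset.Icc (-(n : ℤ)) n,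
      j < k → x j < x k)
    (hμ : ∑ k ∈ Finset.Icc (-(n : ℤ)) n, μ k = 0)
    (Ψ : ℕ → ℝ → ℝ)
    (hΨ : ∀ (l : ℕ) (y : ℝ), Ψ l y =
      (4 * a) ^ (2 * l - 1) / (Nat.factorial (2 * l) : ℝ) *
        ∑ k ∈ Finset.Icc (-(n : ℤ)) n, μ k *
          (bernoulliPolyEval (2 * l) (1 / 2 + (y + x k) / (4 * a)) +
           bernoulliPolyEval (2 * l) (Int.fract ((y - x k) / (4 * a)))))
    (m : ℕ) (hm : 1 ≤ m) (f : ℝ → ℝ)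
    (hf : ContDiffOn ℝ (2 * m) f (Set.Icc (-a) a)) :
    ∑ k ∈ Finset.Icc (-(n : ℤ)) n, μ k * f (x k) =
      (∑ k ∈ Finset.Icc 1 m,
        iteratedDerivWithin (2 * k - 1) f (Set.Icc (-a) a) a * Ψ k a) -
      (∑ k ∈ Finset.Icc 1 m,
        iteratedDerivWithin (2 * k - 1) f (Set.Icc (-a) a) (-a) * Ψ k (-a)) -
      ∫ y in (-a)..a, iteratedDerivWithin (2 * m) f (Set.Icc (-a) a) y * Ψ m y := by
  have haa : -a < a := by linarith
  have hf' : ContDiffOn ℝ ((2*m : ℕ) : ℕ∞) f (Icc (-a) a) := by exact_mod_cast hf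
  have hmem1 : (-(n:ℤ)) ∈ Finset.Icc (-(n:ℤ)) (n:ℤ) := Finset.mem_Icc.mpr ⟨le_rfl, by omega⟩
  have hmem2 : (n:ℤ) ∈ Finset.Icc (-(n:ℤ)) (n:ℤ) := Finset.mem_Icc.mpr ⟨by omega, le_rfl⟩
  have hx : ∀ k ∈ Finset.Icc (-(n:ℤ)) (n:ℤ), x k ∈ Ioo (-a) a := by
    intro k hk
    obtain ⟨h1, h2⟩ := Finset.mem_Icc.mp hk
    constructor
    · rcases eq_or_lt_of_le h1 with h | h
      · rw [← h]; exact hxa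
      · exact lt_trans hxa (hmono _ hmem1 _ hk h)
    · rcases eq_or_lt_of_le h2 with h | h
      · rw [h]; exact hxb
      · exact lt_trans (hmono _ hk _ hmem2 h) hxb
  have hΨ' : ∀ (l : ℕ) (y : ℝ), Ψ l y = ∑ k ∈ Finset.Icc (-(n:ℤ)) (n:ℤ),
      μ k * ((4*a)^(2*l-1)/((Nat.factorial (2*l)):ℝ) * Qc a (x k) (2*l) y) := by
    intro l y
    rw [hΨ, Finset.mul_sum]
    apply Finset.sum_congr rfl
    intro k _
    simp only [bpe_eq, Qc]
    ring
  have hpt : ∀ k ∈ Finset.Icc (-(n:ℤ)) (n:ℤ), f (x k) =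
      (∑ j ∈ Finset.Icc 1 m, iteratedDerivWithin (2*j-1) f (Icc (-a) a) a *
            ((4*a)^(2*j-1)/((Nat.factorial (2*j)):ℝ) * Qc a (x k) (2*j) a))
        - (∑ j ∈ Finset.Icc 1 m, iteratedDerivWithin (2*j-1) f (Icc (-a) a) (-a) *
            ((4*a)^(2*j-1)/((Nat.factorial (2*j)):ℝ) * Qc a (x k) (2*j) (-a)))
        - (∫ y in (-a)..a, iteratedDerivWithin (2*m) f (Icc (-a) a) y *
            ((4*a)^(2*m-1)/((Nat.factorial (2*m)):ℝ) * Qc a (x k) (2*m) y))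
        + (1/(2*a)) * ∫ y in (-a)..a, f y :=
    fun k hk => EM_pointwise ha (hx k hk) m hm f hf'
  -- name the pieces
  set S := Finset.Icc (-(n:ℤ)) (n:ℤ) with hS
  set A : ℤ → ℝ := fun k => ∑ j ∈ Finset.Icc 1 m, iteratedDerivWithin (2*j-1) f (Icc (-a) a) a *
            ((4*a)^(2*j-1)/((Nat.factorial (2*j)):ℝ) * Qc a (x k) (2*j) a) with hA
  set B : ℤ → ℝ := fun k => ∑ j ∈ Finset.Icc 1 m, iteratedDerivWithin (2*j-1) f (Icc (-a) a) (-a) *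
            ((4*a)^(2*j-1)/((Nat.factorial (2*j)):ℝ) * Qc a (x k) (2*j) (-a)) with hB
  set I : ℤ → ℝ := fun k => ∫ y in (-a)..a, iteratedDerivWithin (2*m) f (Icc (-a) a) y *
            ((4*a)^(2*m-1)/((Nat.factorial (2*m)):ℝ) * Qc a (x k) (2*m) y) with hI
  set c : ℝ := (1/(2*a)) * ∫ y in (-a)..a, f y with hc
  have hLHS : ∑ k ∈ S, μ k * f (x k)
      = (∑ k ∈ S, μ k * A k) - (∑ k ∈ S, μ k * B k) - (∑ k ∈ S, μ k * I k)
        + (∑ k ∈ S, μ k) * c := by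
    rw [Finset.sum_mul, ← Finset.sum_sub_distrib, ← Finset.sum_sub_distrib,
      ← Finset.sum_add_distrib]
    apply Finset.sum_congr rfl
    intro k hk
    rw [hpt k hk]
    ring
  -- boundary sums
  have hAB : ∀ z : ℝ, (∑ k ∈ S, μ k * (∑ j ∈ Finset.Icc 1 m,
        iteratedDerivWithin (2*j-1) f (Icc (-a) a) z *
            ((4*a)^(2*j-1)/((Nat.factorial (2*j)):ℝ) * Qc a (x k) (2*j) z)))
      = ∑ j ∈ Finset.Icc 1 m, iteratedDerivWithin (2*j-1) f (Icc (-a) a) z * Ψ j z := by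
    intro z
    simp only [Finset.mul_sum]
    rw [Finset.sum_comm]
    apply Finset.sum_congr rfl
    intro j _
    rw [hΨ' j z, Finset.mul_sum]
    apply Finset.sum_congr rfl
    intro k _
    ring
  have hAB1 : ∑ k ∈ S, μ k * A k
      = ∑ j ∈ Finset.Icc 1 m, iteratedDerivWithin (2*j-1) f (Icc (-a) a) a * Ψ j a := by
    rw [hA]; exact hAB a
  have hAB2 : ∑ k ∈ S, μ k * B k
      = ∑ j ∈ Finset.Icc 1 m, iteratedDerivWithin (2*j-1) f (Icc (-a) a) (-a) * Ψ j (-a) := by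
    rw [hB]; exact hAB (-a)
  have hIs : ∑ k ∈ S, μ k * I k
      = ∫ y in (-a)..a, iteratedDerivWithin (2*m) f (Icc (-a) a) y * Ψ m y := by
    have hint : ∀ k ∈ S, IntervalIntegrable (fun y => μ k *
        (iteratedDerivWithin (2*m) f (Icc (-a) a) y *
          ((4*a)^(2*m-1)/((Nat.factorial (2*m)):ℝ) * Qc a (x k) (2*m) y))) volume (-a) a := by
      intro k hk
      apply ContinuousOn.intervalIntegrable
      rw [uIcc_of_le haa.le]
      exact continuousOn_const.mul ((itD_cont ha hf' (le_refl _)).mul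
        (continuous_const.mul (continuous_Qc a (x k) (by omega))).continuousOn)
    have h1 : ∑ k ∈ S, μ k * I k = ∑ k ∈ S, ∫ y in (-a)..a, μ k *
        (iteratedDerivWithin (2*m) f (Icc (-a) a) y *
          ((4*a)^(2*m-1)/((Nat.factorial (2*m)):ℝ) * Qc a (x k) (2*m) y)) := by
      apply Finset.sum_congr rfl
      intro k _
      rw [hI, intervalIntegral.integral_const_mul]
    rw [h1, ← intervalIntegral.integral_finset_sum hint]
    apply intervalIntegral.integral_congr
    intro y hy
    dsimp only
    rw [hΨ' m y, Finset.mul_sum]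
    apply Finset.sum_congr rfl
    intro k _
    ring
  rw [hLHS, hAB1, hAB2, hIs, hμ, zero_mul, add_zero]
end

section
/- Let T > 0, let f be 2n-times continuously differentiable on (−T, T), and let t_{−n}, …, t_n ∈ (−T, T) be pairwise distinct, and let g(t_{−n}, …, t_n) = ∑_{k=−n}^{n} f(t_k)/∏_{j≠k}(t_k − t_j) denote the divided difference. Then there exists ξ ∈ (−T, T) (depending on the points) such that the partial derivative with respect to t_n of the function (t_n − t_{n−1}) · g(t_{−n}, …, t_n) equals f^(2n)(ξ)/(2n)!. -/
open Real Set Finset Polynomial Lagrange Topology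

noncomputable def myDD (f : ℝ → ℝ) (P : Finset ℝ) : ℝ :=
  ∑ z ∈ P, f z / ∏ w ∈ P.erase z, (z - w)

lemma myDD_rec (f : ℝ → ℝ) {P : Finset ℝ} {a b : ℝ} (ha : a ∈ P) (hb : b ∈ P)
    (hab : a ≠ b) :
    (a - b) * myDD f P = myDD f (P.erase b) - myDD f (P.erase a) := by
  classical
  set P₂ : Finset ℝ := (P.erase a).erase b with hP₂
  have hbP : b ∈ P.erase a := Finset.mem_erase.mpr ⟨hab.symm, hb⟩
  have haP : a ∈ P.erase b := Finset.mem_erase.mpr ⟨hab, ha⟩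
  have hcomm : (P.erase b).erase a = P₂ := Finset.erase_right_comm
  have hsub : a - b ≠ 0 := sub_ne_zero.mpr hab
  rw [myDD, myDD, myDD, Finset.mul_sum]
  rw [← Finset.add_sum_erase _ _ ha]
  rw [← Finset.add_sum_erase _ _ hbP]
  rw [← Finset.add_sum_erase _ _ haP, hcomm]
  rw [← Finset.add_sum_erase _ _ hbP]
  have e1 : (a - b) * (f a / ∏ w ∈ P.erase a, (a - w))
      = f a / ∏ w ∈ P₂, (a - w) := by
    rw [← Finset.mul_prod_erase _ _ hbP, ← hP₂]
    rcases eq_or_ne (∏ w ∈ P₂, (a - w)) 0 with h | h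
    · simp [h]
    · field_simp
  have e2 : (a - b) * (f b / ∏ w ∈ P.erase b, (b - w))
      = -(f b / ∏ w ∈ P₂, (b - w)) := by
    rw [← Finset.mul_prod_erase _ _ haP, hcomm]
    rcases eq_or_ne (∏ w ∈ P₂, (b - w)) 0 with h | h
    · simp [h]
    · have hba : b - a ≠ 0 := sub_ne_zero.mpr hab.symm
      field_simp
      ring
  have e3 : ∀ z ∈ P₂, (a - b) * (f z / ∏ w ∈ P.erase z, (z - w))
      = f z / ∏ w ∈ (P.erase b).erase z, (z - w)
        - f z / ∏ w ∈ (P.erase a).erase z, (z - w) := by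
    intro z hz
    have hzb : z ≠ b := (Finset.mem_erase.mp hz).1
    have hza : z ≠ a := (Finset.mem_erase.mp (Finset.mem_erase.mp hz).2).1
    have hzP : z ∈ P := Finset.mem_of_mem_erase (Finset.mem_of_mem_erase hz)
    have haz : a ∈ P.erase z := Finset.mem_erase.mpr ⟨hza.symm, ha⟩
    have hbz : b ∈ (P.erase z).erase a :=
      Finset.mem_erase.mpr ⟨hab.symm, Finset.mem_erase.mpr ⟨hzb.symm, hb⟩⟩
    have haz' : a ∈ (P.erase b).erase z := Finset.mem_erase.mpr ⟨hza.symm, haP⟩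
    have hbz' : b ∈ (P.erase a).erase z := Finset.mem_erase.mpr ⟨hzb.symm, hbP⟩
    have c1 : ((P.erase b).erase z).erase a = ((P.erase z).erase a).erase b := by
      ext w; simp only [Finset.mem_erase]; tauto
    have c2 : ((P.erase a).erase z).erase b = ((P.erase z).erase a).erase b := by
      ext w; simp only [Finset.mem_erase]; tauto
    rw [← Finset.mul_prod_erase _ _ haz, ← Finset.mul_prod_erase _ _ hbz,
      ← Finset.mul_prod_erase _ _ haz', ← Finset.mul_prod_erase _ _ hbz', c1, c2]
    set r := ∏ w ∈ ((P.erase z).erase a).erase b, (z - w) with hr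
    rcases eq_or_ne r 0 with h | h
    · simp [h]
    · have h1 : z - a ≠ 0 := sub_ne_zero.mpr hza
      have h2 : z - b ≠ 0 := sub_ne_zero.mpr hzb
      field_simp
      ring
  rw [Finset.sum_congr rfl e3, Finset.sum_sub_distrib, e1, e2]
  ring
lemma myDD_image (f : ℝ → ℝ) {ι : Type*} [DecidableEq ι] (S : Finset ι) (x : ι → ℝ)
    (hx : Set.InjOn x S) :
    myDD f (S.image x) = ∑ k ∈ S, f (x k) / ∏ j ∈ S.erase k, (x k - x j) := by
  rw [myDD, Finset.sum_image (fun a ha b hb h => hx ha hb h)]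
  refine Finset.sum_congr rfl fun k hk => ?_
  congr 1
  have himg : (S.image x).erase (x k) = (S.erase k).image x := by
    ext y
    simp only [Finset.mem_erase, Finset.mem_image]
    constructor
    · rintro ⟨hy, j, hj, rfl⟩
      exact ⟨j, ⟨fun h => hy (by rw [h]), hj⟩, rfl⟩
    · rintro ⟨j, ⟨hjk, hj⟩, rfl⟩
      exact ⟨fun h => hjk (hx hj hk h), j, hj, rfl⟩
  rw [himg, Finset.prod_image
    (fun a ha b hb h => hx (Finset.mem_of_mem_erase ha) (Finset.mem_of_mem_erase hb) h)]

lemma contDiff_polyEval (p : Polynomial ℝ) {n : ℕ∞} : ContDiff ℝ n fun x => p.eval x := by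
  induction p using Polynomial.induction_on' with
  | add p q hp hq => simpa [Polynomial.eval_add] using hp.add hq
  | monomial k c => simpa [Polynomial.eval_monomial] using (contDiff_const.mul (contDiff_id.pow k))

lemma iteratedDerivWithin_of_isOpen' {f : ℝ → ℝ} (m : ℕ) {s : Set ℝ} (hs : IsOpen s)
    {x : ℝ} (hx : x ∈ s) : iteratedDerivWithin m f s x = iteratedDeriv m f x := by
  rw [iteratedDerivWithin_eq_iteratedFDerivWithin, iteratedDeriv_eq_iteratedFDeriv,
    iteratedFDerivWithin_of_isOpen m hs hx]

lemma iteratedDeriv_polyEval (p : Polynomial ℝ) (m : ℕ) :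
    iteratedDeriv m (fun x => p.eval x) = fun x => (Polynomial.derivative^[m] p).eval x := by
  induction m generalizing p with
  | zero => simp [iteratedDeriv_zero]
  | succ m ih =>
    rw [iteratedDeriv_succ']
    have h1 : (deriv fun x => p.eval x) = fun x => (Polynomial.derivative p).eval x := by
      funext x; exact Polynomial.deriv (p := p)
    rw [h1, ih]
    funext x
    rw [Function.iterate_succ_apply]

lemma iteratedDeriv_polyEval_eq_coeff (p : Polynomial ℝ) (m : ℕ) (hdeg : p.natDegree ≤ m)
    (x : ℝ) : iteratedDeriv m (fun y => p.eval y) x = m.factorial * p.coeff m := by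
  rw [iteratedDeriv_polyEval]
  have h0 : (Polynomial.derivative^[m] p).natDegree ≤ 0 := by
    refine (Polynomial.natDegree_iterate_derivative p m).trans ?_
    omega
  rw [Polynomial.eq_C_of_natDegree_le_zero h0]
  simp only [Polynomial.eval_C]
  rw [Polynomial.coeff_iterate_derivative]
  simp [Nat.descFactorial_self, nsmul_eq_mul]

lemma rolle_zeros (a b : ℝ) (g : ℝ → ℝ) (hg : ContinuousOn g (Set.Ioo a b)) :
    ∀ (k : ℕ) (S : Finset ℝ), ↑S ⊆ Set.Ioo a b → k + 1 ≤ S.card →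
      (∀ x ∈ S, g x = 0) →
      ∃ S' : Finset ℝ, ↑S' ⊆ Set.Ioo a b ∧ k ≤ S'.card ∧
        (∀ y ∈ S', deriv g y = 0) ∧ (∀ y ∈ S', ∃ x ∈ S, x < y) := by
  intro k
  induction k with
  | zero =>
    intro S hS hcard hz
    exact ⟨∅, by simp, by simp, by simp, by simp⟩
  | succ k ih =>
    intro S hS hcard hz
    have hSne : S.Nonempty := Finset.card_pos.mp (by omega)
    set x := S.min' hSne with hx
    have hxS : x ∈ S := S.min'_mem hSne
    set S₁ := S.erase x with hS₁
    have hcard₁ : k + 1 ≤ S₁.card := by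
      rw [hS₁, Finset.card_erase_of_mem hxS]; omega
    have hS₁sub : ↑S₁ ⊆ Set.Ioo a b := fun y hy => hS (Finset.mem_of_mem_erase hy)
    obtain ⟨S', hS'sub, hS'card, hS'zero, hS'gt⟩ :=
      ih S₁ hS₁sub hcard₁ (fun y hy => hz y (Finset.mem_of_mem_erase hy))
    have hS₁ne : S₁.Nonempty := Finset.card_pos.mp (by omega)
    set m₁ := S₁.min' hS₁ne with hm₁
    have hm₁S₁ : m₁ ∈ S₁ := S₁.min'_mem hS₁ne
    have hm₁S : m₁ ∈ S := Finset.mem_of_mem_erase hm₁S₁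
    have hxm : x < m₁ := by
      rcases lt_or_eq_of_le (S.min'_le _ hm₁S) with h | h
      · exact h
      · exact absurd h.symm (Finset.ne_of_mem_erase hm₁S₁)
    have hxI : x ∈ Set.Ioo a b := hS hxS
    have hmI : m₁ ∈ Set.Ioo a b := hS hm₁S
    have hIcc : Set.Icc x m₁ ⊆ Set.Ioo a b := fun y hy =>
      ⟨lt_of_lt_of_le hxI.1 hy.1, lt_of_le_of_lt hy.2 hmI.2⟩
    obtain ⟨c, hcmem, hczero⟩ :=
      exists_deriv_eq_zero hxm (hg.mono hIcc) (by rw [hz x hxS, hz m₁ hm₁S])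
    have hcI : c ∈ Set.Ioo a b := hIcc ⟨hcmem.1.le, hcmem.2.le⟩
    have hcnot : c ∉ S' := by
      intro hc
      obtain ⟨x₁, hx₁, hlt⟩ := hS'gt c hc
      exact absurd (lt_of_lt_of_le hcmem.2 (S₁.min'_le _ hx₁)) (not_lt.mpr hlt.le)
    refine ⟨insert c S', ?_, ?_, ?_, ?_⟩
    · intro y hy
      rcases Finset.mem_insert.mp hy with rfl | hy
      · exact hcI
      · exact hS'sub hy
    · rw [Finset.card_insert_of_notMem hcnot]; omega
    · intro y hy
      rcases Finset.mem_insert.mp hy with rfl | hy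
      · exact hczero
      · exact hS'zero y hy
    · intro y hy
      rcases Finset.mem_insert.mp hy with rfl | hy
      · exact ⟨x, hxS, hcmem.1⟩
      · obtain ⟨x₁, hx₁, hlt⟩ := hS'gt y hy
        exact ⟨x₁, Finset.mem_of_mem_erase hx₁, hlt⟩

lemma iterated_rolle (m : ℕ) (a b : ℝ) (g : ℝ → ℝ)
    (hg : ContDiffOn ℝ m g (Set.Ioo a b)) (S : Finset ℝ)
    (hS : ↑S ⊆ Set.Ioo a b) (hcard : m + 1 ≤ S.card) (hz : ∀ x ∈ S, g x = 0) :
    ∃ ξ ∈ Set.Ioo a b, iteratedDeriv m g ξ = 0 := by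
  induction m generalizing g S with
  | zero =>
    obtain ⟨x, hx⟩ := Finset.card_pos.mp (show 0 < S.card by omega)
    exact ⟨x, hS hx, by simpa [iteratedDeriv_zero] using hz x hx⟩
  | succ m ih =>
    obtain ⟨S', hS'sub, hS'card, hS'zero, -⟩ :=
      rolle_zeros a b g hg.continuousOn (m + 1) S hS hcard hz
    have hg' : ContDiffOn ℝ m (deriv g) (Set.Ioo a b) := by
      refine hg.deriv_of_isOpen isOpen_Ioo ?_
      norm_cast
    obtain ⟨ξ, hξ, hξ0⟩ := ih (deriv g) hg' S' hS'sub hS'card hS'zero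
    exact ⟨ξ, hξ, by rwa [iteratedDeriv_succ']⟩
lemma basis_coeff (P : Finset ℝ) (i : ℝ) (hi : i ∈ P) :
    (Lagrange.basis P id i).coeff (P.card - 1) = (∏ w ∈ P.erase i, (i - w))⁻¹ := by
  classical
  have hb : Lagrange.basis P id i
      = Polynomial.C (∏ w ∈ P.erase i, (i - w)⁻¹) * nodal (P.erase i) id := by
    rw [Lagrange.basis, nodal, map_prod, ← Finset.prod_mul_distrib]
    exact Finset.prod_congr rfl fun j hj => rfl
  have hmonic : (nodal (P.erase i) id).Monic := nodal_monic
  have hdeg : (nodal (P.erase i) id).natDegree = P.card - 1 := by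
    rw [natDegree_nodal, Finset.card_erase_of_mem hi]
  rw [hb, Polynomial.coeff_C_mul, ← hdeg, hmonic.coeff_natDegree, mul_one,
    Finset.prod_inv_distrib]

lemma myDD_coeff (f : ℝ → ℝ) (P : Finset ℝ) :
    (Lagrange.interpolate P id f).coeff (P.card - 1) = myDD f P := by
  classical
  rw [Lagrange.interpolate_apply, Polynomial.finset_sum_coeff, myDD]
  refine Finset.sum_congr rfl fun i hi => ?_
  rw [Polynomial.coeff_C_mul, basis_coeff P i hi, div_eq_mul_inv]

lemma myDD_mvt (m : ℕ) (lo hi : ℝ) (f : ℝ → ℝ)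
    (hf : ContDiffOn ℝ m f (Set.Ioo lo hi)) (P : Finset ℝ)
    (hP : ↑P ⊆ Set.Ioo lo hi) (hcard : P.card = m + 1) :
    ∃ ξ ∈ Set.Ioo lo hi, myDD f P = iteratedDeriv m f ξ / m.factorial := by
  classical
  set L := Lagrange.interpolate P id f with hL
  have hLc : ContDiff ℝ (m : ℕ∞) fun y => L.eval y := contDiff_polyEval L
  have hGc : ContDiffOn ℝ m (f - fun y => L.eval y) (Set.Ioo lo hi) :=
    hf.sub hLc.contDiffOn
  have hGz : ∀ x ∈ P, (f - fun y => L.eval y) x = 0 := by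
    intro x hx
    have h := Lagrange.eval_interpolate_at_node (v := id) (r := f)
      (fun u _ v _ h => h) hx
    simp only [Pi.sub_apply, ← hL]
    rw [show (id x : ℝ) = x from rfl] at h
    rw [h]; ring
  obtain ⟨ξ, hξ, hξ0⟩ := iterated_rolle m lo hi _ hGc P hP (by omega) hGz
  have hU : UniqueDiffOn ℝ (Set.Ioo lo hi) := isOpen_Ioo.uniqueDiffOn
  have split : iteratedDerivWithin m (f - fun y => L.eval y) (Set.Ioo lo hi) ξ
      = iteratedDerivWithin m f (Set.Ioo lo hi) ξ
        - iteratedDerivWithin m (fun y => L.eval y) (Set.Ioo lo hi) ξ :=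
    iteratedDerivWithin_sub hξ hU (hf ξ hξ) (hLc.contDiffOn ξ hξ)
  rw [iteratedDerivWithin_of_isOpen' m isOpen_Ioo hξ,
    iteratedDerivWithin_of_isOpen' m isOpen_Ioo hξ,
    iteratedDerivWithin_of_isOpen' m isOpen_Ioo hξ, hξ0] at split
  have hdegL : L.natDegree ≤ m := by
    by_cases h0 : L = 0
    · simp [h0]
    · have := Lagrange.degree_interpolate_lt (r := f) (s := P) (v := id)
        (fun u _ v _ h => h)
      rw [← hL, hcard] at this
      have := (Polynomial.natDegree_lt_iff_degree_lt h0).mpr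
        (by exact_mod_cast this)
      omega
  have hcoeff : iteratedDeriv m (fun y => L.eval y) ξ = m.factorial * myDD f P := by
    rw [iteratedDeriv_polyEval_eq_coeff L m hdegL]
    congr 1
    have h2 := myDD_coeff f P
    rw [hcard, Nat.add_sub_cancel] at h2
    exact h2
  refine ⟨ξ, hξ, ?_⟩
  have hfact : (m.factorial : ℝ) ≠ 0 := Nat.cast_ne_zero.mpr m.factorial_ne_zero
  rw [eq_div_iff hfact]
  have : iteratedDeriv m f ξ = m.factorial * myDD f P := by
    rw [← hcoeff]; linarith [split]
  linarith [this]
/-- For pairwise distinct `t₋ₙ, …, tₙ ∈ (−T, T)` and `f ∈ C^{2n}(−T,T)`,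
there exists `ξ ∈ (−T,T)` such that the partial derivative with respect to `tₙ` of
`(tₙ − t_{n−1}) · g(t₋ₙ, …, tₙ)`, where `g` is the divided difference of `f`, equals
`f^{(2n)}(ξ)/(2n)!`. -/
theorem divided_difference_partial_derivative_mean_value
    (n : ℕ) (hn : 1 ≤ n) (T : ℝ) (hT : 0 < T) (f : ℝ → ℝ)
    (hf : ContDiffOn ℝ (2 * n) f (Set.Ioo (-T) T))
    (t : ℤ → ℝ)
    (ht : ∀ k ∈ Finset.Icc (-(n : ℤ)) n, t k ∈ Set.Ioo (-T) T)
    (htd : ∀ j ∈ Finset.Icc (-(n : ℤ)) n, ∀ k ∈ Finset.Icc (-(n : ℤ)) n,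
      j ≠ k → t j ≠ t k) :
    ∃ ξ ∈ Set.Ioo (-T) T,
      deriv (fun s : ℝ =>
          (s - t ((n : ℤ) - 1)) *
            ∑ k ∈ Finset.Icc (-(n : ℤ)) n,
              f (Function.update t (n : ℤ) s k) /
                ∏ j ∈ (Finset.Icc (-(n : ℤ)) n).erase k,
                  (Function.update t (n : ℤ) s k - Function.update t (n : ℤ) s j))
        (t n) =
      iteratedDerivWithin (2 * n) f (Set.Ioo (-T) T) ξ / (Nat.factorial (2 * n) : ℝ) := by
  classical
  set I : Finset ℤ := Finset.Icc (-(n : ℤ)) n with hI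
  have hnI : (n : ℤ) ∈ I := by
    rw [hI, Finset.mem_Icc]; omega
  have hn1I : (n : ℤ) - 1 ∈ I := by
    rw [hI, Finset.mem_Icc]; omega
  have hn1n : (n : ℤ) - 1 ≠ (n : ℤ) := by omega
  have hcardI : I.card = 2 * n + 1 := by
    rw [hI, Int.card_Icc]; omega
  -- the fixed node values other than slot n
  set R₀ : Finset ℝ := (I.erase (n : ℤ)).image t with hR₀
  have hinjt : Set.InjOn t ↑(I.erase (n : ℤ)) := by
    intro j hj k hk h
    by_contra hne
    exact htd j (Finset.mem_of_mem_erase hj) k (Finset.mem_of_mem_erase hk) hne h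
  have htnR₀ : t (n : ℤ) ∉ R₀ := by
    intro h
    obtain ⟨k, hk, hkt⟩ := Finset.mem_image.mp h
    exact htd k (Finset.mem_of_mem_erase hk) (n : ℤ) hnI
      (Finset.ne_of_mem_erase hk) hkt
  have htn1R₀ : t ((n : ℤ) - 1) ∈ R₀ :=
    Finset.mem_image.mpr ⟨(n : ℤ) - 1, Finset.mem_erase.mpr ⟨hn1n, hn1I⟩, rfl⟩
  set Q : Finset ℝ := R₀.erase (t ((n : ℤ) - 1)) with hQ
  have hQsub : Q ⊆ R₀ := Finset.erase_subset _ _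
  have htnQ : t (n : ℤ) ∉ Q := fun h => htnR₀ (hQsub h)
  have hcardR₀ : R₀.card = 2 * n := by
    rw [hR₀, Finset.card_image_of_injOn hinjt, Finset.card_erase_of_mem hnI, hcardI]
    omega
  have hcardQ : Q.card = 2 * n - 1 := by
    rw [hQ, Finset.card_erase_of_mem htn1R₀, hcardR₀]
  -- location of the nodes
  have hR₀T : ∀ z ∈ R₀, z ∈ Set.Ioo (-T) T := by
    intro z hz
    obtain ⟨k, hk, rfl⟩ := Finset.mem_image.mp hz
    exact ht k (Finset.mem_of_mem_erase hk)
  set A : Finset ℝ := insert (t (n : ℤ)) R₀ with hA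
  have hAne : A.Nonempty := ⟨t (n : ℤ), Finset.mem_insert_self _ _⟩
  have hAT : ∀ z ∈ A, z ∈ Set.Ioo (-T) T := by
    intro z hz
    rcases Finset.mem_insert.mp hz with rfl | hz
    · exact ht (n : ℤ) hnI
    · exact hR₀T z hz
  set lo : ℝ := (-T + A.min' hAne) / 2 with hlo
  set hi : ℝ := (A.max' hAne + T) / 2 with hhi
  have hminT : A.min' hAne ∈ Set.Ioo (-T) T := hAT _ (A.min'_mem hAne)
  have hmaxT : A.max' hAne ∈ Set.Ioo (-T) T := hAT _ (A.max'_mem hAne)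
  have hlo1 : -T < lo := by rw [hlo]; linarith [hminT.1]
  have hlo2 : lo < A.min' hAne := by rw [hlo]; linarith [hminT.1]
  have hhi1 : hi < T := by rw [hhi]; linarith [hmaxT.2]
  have hhi2 : A.max' hAne < hi := by rw [hhi]; linarith [hmaxT.2]
  have hAIoo : ∀ z ∈ A, z ∈ Set.Ioo lo hi := fun z hz =>
    ⟨lt_of_lt_of_le hlo2 (A.min'_le z hz), lt_of_le_of_lt (A.le_max' z hz) hhi2⟩
  have hIooIoo : Set.Ioo lo hi ⊆ Set.Ioo (-T) T :=
    Set.Ioo_subset_Ioo hlo1.le hhi1.le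
  have hIccIoo : Set.Icc lo hi ⊆ Set.Ioo (-T) T := fun z hz =>
    ⟨lt_of_lt_of_le hlo1 hz.1, lt_of_le_of_lt hz.2 hhi1⟩
  have htnIoo : t (n : ℤ) ∈ Set.Ioo lo hi := hAIoo _ (Finset.mem_insert_self _ _)
  have hQIoo : ∀ z ∈ Q, z ∈ Set.Ioo lo hi := fun z hz =>
    hAIoo z (Finset.mem_insert_of_mem (hQsub hz))
  -- the auxiliary function ψ
  set ψ : ℝ → ℝ := fun s => myDD f (insert s Q) with hψdef
  -- key identity
  have key : ∀ s : ℝ, s ∉ (R₀ : Set ℝ) →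
      (s - t ((n : ℤ) - 1)) *
        ∑ k ∈ I, f (Function.update t (n : ℤ) s k) /
          ∏ j ∈ I.erase k,
            (Function.update t (n : ℤ) s k - Function.update t (n : ℤ) s j)
      = ψ s - myDD f R₀ := by
    intro s hs
    have hsR₀ : s ∉ R₀ := hs
    have hsQ : s ∉ Q := fun h => hsR₀ (hQsub h)
    have hstn1 : s ≠ t ((n : ℤ) - 1) := fun h => hsR₀ (h ▸ htn1R₀)
    have hinj : Set.InjOn (Function.update t (n : ℤ) s) ↑I := by
      intro j hj k hk h
      by_contra hne
      rcases eq_or_ne j (n : ℤ) with rfl | hjn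
      · rw [Function.update_self, Function.update_of_ne (Ne.symm hne)] at h
        exact hsR₀ (h ▸ Finset.mem_image.mpr
          ⟨k, Finset.mem_erase.mpr ⟨Ne.symm hne, hk⟩, rfl⟩)
      · rcases eq_or_ne k (n : ℤ) with rfl | hkn
        · rw [Function.update_self, Function.update_of_ne hjn] at h
          exact hsR₀ (h ▸ Finset.mem_image.mpr
            ⟨j, Finset.mem_erase.mpr ⟨hjn, hj⟩, rfl⟩)
        · rw [Function.update_of_ne hjn, Function.update_of_ne hkn] at h
          exact htd j hj k hk hne h
    have himg : I.image (Function.update t (n : ℤ) s) = insert s R₀ := by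
      conv_lhs => rw [← Finset.insert_erase hnI]
      rw [Finset.image_insert, Function.update_self]
      congr 1
      refine Finset.image_congr fun k hk => ?_
      exact Function.update_of_ne (Finset.ne_of_mem_erase hk) _ _
    rw [← myDD_image f I _ hinj, himg]
    have hsins : s ∈ insert s R₀ := Finset.mem_insert_self _ _
    have htn1ins : t ((n : ℤ) - 1) ∈ insert s R₀ := Finset.mem_insert_of_mem htn1R₀
    rw [myDD_rec f hsins htn1ins hstn1]
    rw [Finset.erase_insert hsR₀, Finset.erase_insert_of_ne hstn1]
  -- eventual equality near t n
  have hRopen : IsOpen ((R₀ : Set ℝ)ᶜ) := (R₀.finite_toSet.isClosed).isOpen_compl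
  have hev1 : ∀ᶠ s in 𝓝 (t (n : ℤ)), s ∉ (R₀ : Set ℝ) :=
    hRopen.mem_nhds htnR₀
  have hevEq : (fun s : ℝ =>
      (s - t ((n : ℤ) - 1)) *
        ∑ k ∈ I, f (Function.update t (n : ℤ) s k) /
          ∏ j ∈ I.erase k,
            (Function.update t (n : ℤ) s k - Function.update t (n : ℤ) s j))
      =ᶠ[𝓝 (t (n : ℤ))] fun s => ψ s - myDD f R₀ :=
    hev1.mono fun s hs => key s hs
  -- explicit formula for ψ off Q
  set χ : ℝ → ℝ := fun s => f s / ∏ w ∈ Q, (s - w)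
      + ∑ z ∈ Q, f z / ((z - s) * ∏ w ∈ Q.erase z, (z - w)) with hχdef
  have hψχ : ∀ s : ℝ, s ∉ (Q : Set ℝ) → ψ s = χ s := by
    intro s hs
    have hsQ : s ∉ Q := hs
    rw [hψdef, hχdef]
    simp only [myDD, Finset.sum_insert hsQ, Finset.erase_insert hsQ]
    congr 1
    refine Finset.sum_congr rfl fun z hz => ?_
    have hzs : s ≠ z := fun h => hsQ (h ▸ hz)
    rw [Finset.erase_insert_of_ne hzs, Finset.prod_insert
      (fun h => hsQ (Finset.mem_of_mem_erase h))]
  -- differentiability of χ at t n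
  have hdf : DifferentiableAt ℝ f (t (n : ℤ)) := by
    have := hf.contDiffAt (isOpen_Ioo.mem_nhds (ht (n : ℤ) hnI))
    exact this.differentiableAt (by exact_mod_cast (show 2 * n ≠ 0 by omega))
  have hχdiff : DifferentiableAt ℝ χ (t (n : ℤ)) := by
    rw [hχdef]
    have h1 : DifferentiableAt ℝ (fun s : ℝ => ∏ w ∈ Q, (s - w)) (t (n : ℤ)) := by
      have heq : (fun s : ℝ => ∏ w ∈ Q, (s - w))
          = fun s => (Lagrange.nodal Q id).eval s := by
        funext s; rw [Lagrange.eval_nodal]; rfl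
      rw [heq]
      exact (Polynomial.differentiable _).differentiableAt
    have h1ne : ∏ w ∈ Q, (t (n : ℤ) - w) ≠ 0 := by
      refine Finset.prod_ne_zero_iff.mpr fun w hw => sub_ne_zero.mpr ?_
      exact fun h => htnQ (h ▸ hw)
    refine DifferentiableAt.add (hdf.div h1 h1ne) ?_
    refine DifferentiableAt.fun_sum fun z hz => ?_
    have hz2 : (z - t (n : ℤ)) * ∏ w ∈ Q.erase z, (z - w) ≠ 0 := by
      refine mul_ne_zero (sub_ne_zero.mpr fun h => htnQ (h ▸ hz)) ?_
      refine Finset.prod_ne_zero_iff.mpr fun w hw => sub_ne_zero.mpr ?_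
      exact (Finset.ne_of_mem_erase hw).symm
    exact (differentiableAt_const _).div
      (((differentiableAt_const _).sub differentiableAt_id).mul
        (differentiableAt_const _)) hz2
  set d : ℝ := deriv χ (t (n : ℤ)) with hd
  have hχ' : HasDerivAt χ d (t (n : ℤ)) := hχdiff.hasDerivAt
  have hQopen : IsOpen ((Q : Set ℝ)ᶜ) := (Q.finite_toSet.isClosed).isOpen_compl
  have hev2 : ∀ᶠ s in 𝓝 (t (n : ℤ)), s ∉ (Q : Set ℝ) := hQopen.mem_nhds htnQ
  have hψ' : HasDerivAt ψ d (t (n : ℤ)) :=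
    hχ'.congr_of_eventuallyEq (hev2.mono fun s hs => hψχ s hs)
  -- the derivative in the goal equals d
  have hderiv : deriv (fun s : ℝ =>
      (s - t ((n : ℤ) - 1)) *
        ∑ k ∈ I, f (Function.update t (n : ℤ) s k) /
          ∏ j ∈ I.erase k,
            (Function.update t (n : ℤ) s k - Function.update t (n : ℤ) s j))
      (t (n : ℤ)) = d := by
    rw [hevEq.deriv_eq]
    exact (hψ'.sub_const _).deriv
  -- slope analysis
  have htend : Filter.Tendsto (slope ψ (t (n : ℤ))) (𝓝[≠] (t (n : ℤ))) (𝓝 d) :=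
    hasDerivAt_iff_tendsto_slope.mp hψ'
  set E : Set ℝ :=
    (fun ξ => iteratedDeriv (2 * n) f ξ / ((2 * n).factorial : ℝ)) '' Set.Icc lo hi
    with hE
  have hfIoo : ContDiffOn ℝ (2 * n) f (Set.Ioo lo hi) := hf.mono hIooIoo
  have hevslope : ∀ᶠ s in 𝓝[≠] (t (n : ℤ)), slope ψ (t (n : ℤ)) s ∈ E := by
    have hevIoo : ∀ᶠ s in 𝓝 (t (n : ℤ)), s ∈ Set.Ioo lo hi :=
      isOpen_Ioo.mem_nhds htnIoo
    have h3 := (hev1.and hevIoo).filter_mono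
      (nhdsWithin_le_nhds (s := {(t (n : ℤ))}ᶜ))
    filter_upwards [h3, eventually_mem_nhdsWithin] with s hs hsne
    obtain ⟨hsR₀, hsIoo⟩ := hs
    have hstn : s ≠ t (n : ℤ) := hsne
    have hsQ : s ∉ Q := fun h => hsR₀ (hQsub h)
    have htnins : t (n : ℤ) ∉ insert s Q :=
      fun h => (Finset.mem_insert.mp h).elim (fun h => hstn h.symm) htnQ
    have hsins : s ∈ insert (t (n : ℤ)) (insert s Q) :=
      Finset.mem_insert_of_mem (Finset.mem_insert_self _ _)
    have htnins' : t (n : ℤ) ∈ insert (t (n : ℤ)) (insert s Q) :=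
      Finset.mem_insert_self _ _
    have hrec := myDD_rec f hsins htnins' hstn
    have he1 : (insert (t (n : ℤ)) (insert s Q)).erase (t (n : ℤ)) = insert s Q :=
      Finset.erase_insert htnins
    have he2 : (insert (t (n : ℤ)) (insert s Q)).erase s = insert (t (n : ℤ)) Q := by
      rw [Finset.erase_insert_of_ne (fun h => hstn h.symm), Finset.erase_insert hsQ]
    rw [he1, he2] at hrec
    -- MVT for the big node set
    set P' : Finset ℝ := insert (t (n : ℤ)) (insert s Q) with hP'
    have hcardP' : P'.card = 2 * n + 1 := by
      rw [hP', Finset.card_insert_of_notMem htnins,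
        Finset.card_insert_of_notMem hsQ, hcardQ]
      omega
    have hP'sub : ↑P' ⊆ Set.Ioo lo hi := by
      intro z hz
      rcases Finset.mem_insert.mp hz with rfl | hz
      · exact htnIoo
      · rcases Finset.mem_insert.mp hz with rfl | hz
        · exact hsIoo
        · exact hQIoo z hz
    obtain ⟨ξ, hξmem, hξval⟩ := myDD_mvt (2 * n) lo hi f hfIoo P' hP'sub hcardP'
    have hslope : slope ψ (t (n : ℤ)) s = myDD f P' := by
      rw [slope_def_field]
      have hdiff : ψ s - ψ (t (n : ℤ)) = (s - t (n : ℤ)) * myDD f P' := hrec.symm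
      rw [hdiff, mul_comm, mul_div_assoc, div_self (sub_ne_zero.mpr hstn), mul_one]
    rw [hslope, hξval]
    exact ⟨ξ, Set.mem_Icc_of_Ioo hξmem, rfl⟩
  -- E is compact
  have hcont : ContinuousOn (fun ξ => iteratedDeriv (2 * n) f ξ) (Set.Icc lo hi) := by
    have h1 : ContinuousOn (iteratedDerivWithin (2 * n) f (Set.Ioo (-T) T))
        (Set.Ioo (-T) T) :=
      hf.continuousOn_iteratedDerivWithin le_rfl isOpen_Ioo.uniqueDiffOn
    have h2 : ContinuousOn (fun ξ => iteratedDeriv (2 * n) f ξ) (Set.Ioo (-T) T) :=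
      h1.congr fun x hx => (iteratedDerivWithin_of_isOpen' _ isOpen_Ioo hx).symm
    exact h2.mono hIccIoo
  have hEcomp : IsCompact E := by
    rw [hE]
    exact isCompact_Icc.image_of_continuousOn (hcont.div_const _)
  have hdE : d ∈ E := by
    refine hEcomp.isClosed.mem_of_tendsto htend hevslope
  obtain ⟨ξ, hξIcc, hξval⟩ := hdE
  refine ⟨ξ, hIccIoo hξIcc, ?_⟩
  rw [hderiv, ← hξval, iteratedDerivWithin_of_isOpen' _ isOpen_Ioo (hIccIoo hξIcc)]
end

section
/- Define integers b_{k,l} for k, l ≥ 0 recursively by b_{0,0} = 1, b_{k,0} = b_{0,l} = 0 for k, l ≥ 1, and b_{k+1,l+1} = b_{k,l} + l² · b_{k+1,l} for k, l ≥ 0. Then for every integer k ≥ 0 and every x ∈ [−1, 1], one has (arcsin x)^{2k} = ∑_{l=0}^{∞} ((2k)!/(2l)!) · 2^{2l−2k} · b_{k,l} · x^{2l}. -/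
open Real

/-- The integers `b_{k,l}` of Sublemma 1: `b_{0,0} = 1`, `b_{k,0} = b_{0,l} = 0` for
`k, l ≥ 1`, and `b_{k+1,l+1} = b_{k,l} + l² b_{k+1,l}`. -/
def bInt : ℕ → ℕ → ℤ
  | 0, 0 => 1
  | 0, _ + 1 => 0
  | _ + 1, 0 => 0
  | k + 1, l + 1 => bInt k l + (l : ℤ) ^ 2 * bInt (k + 1) l
termination_by k l => (k, l)

lemma bInt_succ_succ (k l : ℕ) : bInt (k+1) (l+1) = bInt k l + (l:ℤ)^2 * bInt (k+1) l := by
  rw [bInt]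

lemma bInt_zero_zero : bInt 0 0 = 1 := by rw [bInt]
lemma bInt_zero_right (k : ℕ) : bInt (k+1) 0 = 0 := by rw [bInt]
lemma bInt_zero_left (l : ℕ) : bInt 0 (l+1) = 0 := by rw [bInt]

lemma bInt_nonneg (k l : ℕ) : 0 ≤ bInt k l := by
  induction k generalizing l with
  | zero => cases l with
    | zero => rw [bInt]; norm_num
    | succ l => rw [bInt_zero_left]
  | succ k ih =>
    induction l with
    | zero => rw [bInt_zero_right]
    | succ l ihl =>
      rw [bInt_succ_succ]
      exact add_nonneg (ih l) (mul_nonneg (by positivity) ihl)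

lemma bInt_bound (k : ℕ) : ∀ l, bInt k (l+1) ≤ ((Nat.factorial l : ℤ))^2 * ((l:ℤ)+1)^k := by
  induction k with
  | zero =>
    intro l; rw [bInt_zero_left]; positivity
  | succ k ih =>
    intro l
    induction l with
    | zero =>
      rw [bInt_succ_succ]
      rcases k with _ | k
      · rw [bInt] ; simp [bInt_zero_right]
      · rw [bInt_zero_right]; simp [bInt_zero_right]
    | succ l ihl =>
      rw [bInt_succ_succ]
      have h1 : bInt k (l+1) ≤ ((Nat.factorial l : ℤ))^2 * ((l:ℤ)+1)^k := ih l
      have h2 : ((l:ℤ)+1)^2 * bInt (k+1) (l+1) ≤ ((l:ℤ)+1)^2 * (((Nat.factorial l : ℤ))^2 * ((l:ℤ)+1)^(k+1)) := by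
        apply mul_le_mul_of_nonneg_left ihl (by positivity)
      have hfact : (Nat.factorial (l+1) : ℤ) = ((l:ℤ)+1) * Nat.factorial l := by
        push_cast [Nat.factorial_succ]; ring
      have key : ((l:ℤ)+1)^(k+1) + ((l:ℤ)+1)^k ≤ ((l:ℤ)+2)^(k+1) := by
        have : ((l:ℤ)+2)^(k+1) = ((l:ℤ)+2) * ((l:ℤ)+2)^k := by ring
        have h3 : ((l:ℤ)+1)^k ≤ ((l:ℤ)+2)^k := by
          apply pow_le_pow_left₀ (by positivity) (by linarith)
        calc ((l:ℤ)+1)^(k+1) + ((l:ℤ)+1)^k = ((l:ℤ)+1+1) * ((l:ℤ)+1)^k := by ring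
          _ ≤ ((l:ℤ)+2) * ((l:ℤ)+2)^k := by
              apply mul_le_mul_of_nonneg_left h3 (by positivity)
          _ = ((l:ℤ)+2)^(k+1) := by ring
      have key2 : ((l:ℤ)+1)^2*(Nat.factorial l:ℤ)^2 * (((l:ℤ)+1)^(k+1) + ((l:ℤ)+1)^k)
          ≤ ((l:ℤ)+1)^2*(Nat.factorial l:ℤ)^2 * ((l:ℤ)+2)^(k+1) :=
        mul_le_mul_of_nonneg_left key (by positivity)
      have key3 : (Nat.factorial l:ℤ)^2 * ((l:ℤ)+1)^k ≤ ((l:ℤ)+1)^2*((Nat.factorial l:ℤ)^2 * ((l:ℤ)+1)^k) := by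
        apply le_mul_of_one_le_left (by positivity)
        nlinarith [sq_nonneg ((l:ℤ)+1)]
      rw [hfact]
      push_cast [hfact]
      have e : ((l:ℤ) + 1 + 1) ^ (k+1) = ((l:ℤ)+2)^(k+1) := by congr 1 <;> ring
      rw [e]
      nlinarith [h1, h2, key2, key3]

lemma four_pow_fact (l : ℕ) : 4^l * (Nat.factorial l)^2 ≤ (2*l+1) * Nat.factorial (2*l) := by
  induction l with
  | zero => simp
  | succ l ih =>
    have h2 : 2*(l+1) = 2*l+1+1 := by ring
    rw [h2, Nat.factorial_succ, Nat.factorial_succ, Nat.factorial_succ]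
    calc 4^(l+1) * ((l+1) * Nat.factorial l)^2
        = (l+1)^2 * 4 * (4^l * (Nat.factorial l)^2) := by ring
      _ ≤ (l+1)^2 * 4 * ((2*l+1) * Nat.factorial (2*l)) := by
          exact Nat.mul_le_mul_left _ ih
      _ = (2*l+2) * ((2*l+1+1) * ((2*l+1) * Nat.factorial (2*l))) := by ring
      _ ≤ (2*(l+1)+1) * ((2*l+1+1) * ((2*l+1) * Nat.factorial (2*l))) := by
          apply Nat.mul_le_mul_right; omega

noncomputable def aa (k l : ℕ) : ℝ :=
  (Nat.factorial (2*k) : ℝ) / (Nat.factorial (2*l) : ℝ) * ((4:ℝ)^l / 4^k) * (bInt k l : ℝ)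

lemma aa_eq (k l : ℕ) :
    (Nat.factorial (2 * k) : ℝ) / (Nat.factorial (2 * l) : ℝ) *
      (2 : ℝ) ^ (2 * (l : ℤ) - 2 * (k : ℤ)) * (bInt k l : ℝ) = aa k l := by
  have h : (2 : ℝ) ^ (2 * (l : ℤ) - 2 * (k : ℤ)) = (4:ℝ)^l / 4^k := by
    rw [zpow_sub₀ (by norm_num : (2:ℝ) ≠ 0)]
    have h1 : (2:ℝ) ^ (2 * (l:ℤ)) = (4:ℝ)^l := by
      rw [show 2 * (l:ℤ) = ((2*l : ℕ) : ℤ) by push_cast; ring, zpow_natCast, pow_mul]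
      norm_num
    have h2 : (2:ℝ) ^ (2 * (k:ℤ)) = (4:ℝ)^k := by
      rw [show 2 * (k:ℤ) = ((2*k : ℕ) : ℤ) by push_cast; ring, zpow_natCast, pow_mul]
      norm_num
    rw [h1, h2]
  rw [h, aa]

lemma aa_nonneg (k l : ℕ) : 0 ≤ aa k l := by
  have := bInt_nonneg k l
  unfold aa
  have h : (0:ℝ) ≤ (bInt k l : ℝ) := by exact_mod_cast this
  positivity

lemma aa_zero (k : ℕ) : aa (k+1) 0 = 0 := by
  unfold aa; rw [bInt_zero_right]; norm_num

/-- the key recurrence for the coefficients -/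
lemma aa_rec (k l : ℕ) :
    aa (k+1) (l+1) * ((2*(l:ℝ)+2) * (2*(l:ℝ)+1)) =
      (2*(k:ℝ)+2) * (2*(k:ℝ)+1) * aa k l + 4 * (l:ℝ)^2 * aa (k+1) l := by
  have hb : (bInt (k+1) (l+1) : ℝ) = (bInt k l : ℝ) + (l:ℝ)^2 * (bInt (k+1) l : ℝ) := by
    rw [bInt_succ_succ]; push_cast; ring
  have hf1 : (Nat.factorial (2*(l+1)) : ℝ) = (2*(l:ℝ)+2) * ((2*(l:ℝ)+1) * (Nat.factorial (2*l) : ℝ)) := by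
    rw [show 2*(l+1) = (2*l+1)+1 by ring, Nat.factorial_succ, Nat.factorial_succ]
    push_cast; ring
  have hf2 : (Nat.factorial (2*(k+1)) : ℝ) = (2*(k:ℝ)+2) * ((2*(k:ℝ)+1) * (Nat.factorial (2*k) : ℝ)) := by
    rw [show 2*(k+1) = (2*k+1)+1 by ring, Nat.factorial_succ, Nat.factorial_succ]
    push_cast; ring
  have hfl : (Nat.factorial (2*l) : ℝ) ≠ 0 := by positivity
  have h4k : ((4:ℝ)^(k+1)) ≠ 0 := by positivity
  unfold aa
  rw [hb, hf1, hf2]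
  have h1 : (0:ℝ) < 2*(l:ℝ)+2 := by positivity
  have h2 : (0:ℝ) < 2*(l:ℝ)+1 := by positivity
  field_simp
  ring

lemma aa_le (k l : ℕ) : aa k l ≤ 3 * (Nat.factorial (2*k) : ℝ) * ((l:ℝ)+1)^(k+1) := by
  rcases l with _ | l
  · unfold aa
    rcases k with _ | k
    · rw [bInt_zero_zero]
      norm_num [Nat.factorial]
    · rw [bInt_zero_right]
      push_cast
      rw [mul_zero]
      positivity
  · -- l+1 ≥ 1
    have hb : (bInt k (l+1) : ℝ) ≤ (Nat.factorial l : ℝ)^2 * ((l:ℝ)+1)^k := by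
      exact_mod_cast bInt_bound k l
    have hfp : (0:ℝ) < (Nat.factorial (2*(l+1)) : ℝ) := by positivity
    have h4 : (4:ℝ)^(l+1) * (Nat.factorial (l+1) : ℝ)^2 ≤ (2*((l:ℝ)+1)+1) * (Nat.factorial (2*(l+1)) : ℝ) := by
      exact_mod_cast four_pow_fact (l+1)
    -- aa k (l+1) = (2k)!/(2l+2)! * 4^{l+1}/4^k * b ≤ (2k)! * 4^{l+1} (l!)^2 (l+1)^k / (2l+2)!
    -- and 4^{l+1} (l!)^2/(2l+2)! = 4^{l+1} ((l+1)!)^2/((l+1)^2 (2l+2)!) ≤ (2l+3)/(l+1)^2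
    unfold aa
    have hfact1 : (Nat.factorial (l+1) : ℝ) = ((l:ℝ)+1) * (Nat.factorial l : ℝ) := by
      rw [Nat.factorial_succ]; push_cast; ring
    have hkey : (4:ℝ)^(l+1) * (Nat.factorial l : ℝ)^2 / (Nat.factorial (2*(l+1)) : ℝ) ≤ (2*((l:ℝ)+1)+1) / ((l:ℝ)+1)^2 := by
      rw [div_le_div_iff₀ hfp (by positivity)]
      calc (4:ℝ)^(l+1) * (Nat.factorial l : ℝ)^2 * ((l:ℝ)+1)^2
          = (4:ℝ)^(l+1) * (Nat.factorial (l+1) : ℝ)^2 := by rw [hfact1]; ring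
        _ ≤ (2*((l:ℝ)+1)+1) * (Nat.factorial (2*(l+1)) : ℝ) := h4
    have hb' : (0:ℝ) ≤ (bInt k (l+1) : ℝ) := by exact_mod_cast bInt_nonneg k (l+1)
    have step1 : (Nat.factorial (2*k) : ℝ) / (Nat.factorial (2*(l+1)) : ℝ) * ((4:ℝ)^(l+1) / 4^k) * (bInt k (l+1) : ℝ)
        ≤ (Nat.factorial (2*k) : ℝ) * ((4:ℝ)^(l+1) * (Nat.factorial l : ℝ)^2 / (Nat.factorial (2*(l+1)) : ℝ)) * ((l:ℝ)+1)^k := by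
      have h4k : (1:ℝ) ≤ (4:ℝ)^k := one_le_pow₀ (by norm_num)
      calc (Nat.factorial (2*k) : ℝ) / (Nat.factorial (2*(l+1)) : ℝ) * ((4:ℝ)^(l+1) / 4^k) * (bInt k (l+1) : ℝ)
          ≤ (Nat.factorial (2*k) : ℝ) / (Nat.factorial (2*(l+1)) : ℝ) * ((4:ℝ)^(l+1) / 4^k) * ((Nat.factorial l : ℝ)^2 * ((l:ℝ)+1)^k) := by
            apply mul_le_mul_of_nonneg_left hb (by positivity)
        _ ≤ (Nat.factorial (2*k) : ℝ) / (Nat.factorial (2*(l+1)) : ℝ) * ((4:ℝ)^(l+1) / 1) * ((Nat.factorial l : ℝ)^2 * ((l:ℝ)+1)^k) := by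
            apply mul_le_mul_of_nonneg_right _ (by positivity)
            apply mul_le_mul_of_nonneg_left _ (by positivity)
            apply div_le_div_of_nonneg_left (by positivity) (by norm_num) h4k
        _ = (Nat.factorial (2*k) : ℝ) * ((4:ℝ)^(l+1) * (Nat.factorial l : ℝ)^2 / (Nat.factorial (2*(l+1)) : ℝ)) * ((l:ℝ)+1)^k := by
            ring
    calc (Nat.factorial (2*k) : ℝ) / (Nat.factorial (2*(l+1)) : ℝ) * ((4:ℝ)^(l+1) / 4^k) * (bInt k (l+1) : ℝ)
        ≤ (Nat.factorial (2*k) : ℝ) * ((4:ℝ)^(l+1) * (Nat.factorial l : ℝ)^2 / (Nat.factorial (2*(l+1)) : ℝ)) * ((l:ℝ)+1)^k := step1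
      _ ≤ (Nat.factorial (2*k) : ℝ) * ((2*((l:ℝ)+1)+1) / ((l:ℝ)+1)^2) * ((l:ℝ)+1)^k := by
          apply mul_le_mul_of_nonneg_right (mul_le_mul_of_nonneg_left hkey (by positivity)) (by positivity)
      _ ≤ 3 * (Nat.factorial (2*k) : ℝ) * (((l:ℝ)+1)+1)^(k+1) := by
          have h1 : (2*((l:ℝ)+1)+1) / ((l:ℝ)+1)^2 ≤ 3 := by
            rw [div_le_iff₀ (by positivity)]
            nlinarith [sq_nonneg ((l:ℝ)+1), (by positivity : (0:ℝ) < (l:ℝ)+1)]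
          have h2 : ((l:ℝ)+1)^k ≤ (((l:ℝ)+1)+1)^(k+1) := by
            calc ((l:ℝ)+1)^k ≤ (((l:ℝ)+1)+1)^k := by
                  apply pow_le_pow_left₀ (by positivity) (by linarith)
              _ ≤ (((l:ℝ)+1)+1)^(k+1) := by
                  apply pow_le_pow_right₀ (by linarith) (by omega)
          calc (Nat.factorial (2*k) : ℝ) * ((2*((l:ℝ)+1)+1) / ((l:ℝ)+1)^2) * ((l:ℝ)+1)^k
              ≤ (Nat.factorial (2*k) : ℝ) * 3 * (((l:ℝ)+1)+1)^(k+1) := by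
                apply mul_le_mul (mul_le_mul_of_nonneg_left h1 (by positivity)) h2 (by positivity) (by positivity)
            _ = 3 * (Nat.factorial (2*k) : ℝ) * (((l:ℝ)+1)+1)^(k+1) := by ring
      _ = 3 * (Nat.factorial (2*k) : ℝ) * ((((l:ℕ)+1:ℕ):ℝ)+1)^(k+1) := by push_cast; ring

lemma summable_poly_geom (m : ℕ) {ρ : ℝ} (h0 : 0 ≤ ρ) (h : ρ < 1) :
    Summable (fun l : ℕ => ((l:ℝ)+1)^m * ρ^l) := by
  have A : Summable (fun l : ℕ => (l:ℝ)^m * ρ^l) :=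
    summable_pow_mul_geometric_of_norm_lt_one m (by rwa [Real.norm_eq_abs, abs_of_nonneg h0])
  rcases eq_or_lt_of_le h0 with h0' | h0'
  · apply summable_of_ne_finset_zero (s := {0})
    intro l hl
    have hl' : l ≠ 0 := by simpa using hl
    rw [← h0', zero_pow hl', mul_zero]
  · have B : Summable (fun l : ℕ => ((l+1:ℕ):ℝ)^m * ρ^(l+1)) :=
      (summable_nat_add_iff 1).2 A
    have C := B.mul_left ρ⁻¹
    apply C.congr
    intro l
    push_cast
    rw [pow_succ]
    field_simp
  
lemma summable_poly_geom' (m : ℕ) {ρ : ℝ} (h0 : 0 ≤ ρ) (h : ρ < 1) :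
    Summable (fun l : ℕ => ((l:ℝ)+1)^m * ρ^(l-1)) := by
  apply (summable_nat_add_iff 1).1
  have A := (summable_poly_geom m h0 h).mul_left (2^m)
  apply Summable.of_nonneg_of_le _ _ A
  · intro l; positivity
  · intro l
    simp only [Nat.add_sub_cancel]
    push_cast
    have : ((l:ℝ)+1+1)^m ≤ (2*((l:ℝ)+1))^m := by
      apply pow_le_pow_left₀ (by positivity) (by linarith)
    calc ((l:ℝ)+1+1)^m * ρ^l ≤ (2*((l:ℝ)+1))^m * ρ^l := by
          apply mul_le_mul_of_nonneg_right this (by positivity)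
      _ = 2^m * (((l:ℝ)+1)^m * ρ^l) := by rw [mul_pow]; ring

open Set

lemma const_of_deriv (V : ℝ → ℝ) (h : ∀ x ∈ Set.Ioo (-1:ℝ) 1, HasDerivAt V 0 x)
    {x : ℝ} (hx : x ∈ Set.Ioo (-1:ℝ) 1) : V x = V 0 := by
  have h0 : (0:ℝ) ∈ Set.Ioo (-1:ℝ) 1 := by norm_num
  rcases lt_trichotomy x 0 with hlt | heq | hgt
  · have hsub : Set.Icc x 0 ⊆ Set.Ioo (-1:ℝ) 1 := fun y hy =>
      ⟨lt_of_lt_of_le hx.1 hy.1, lt_of_le_of_lt hy.2 (by norm_num)⟩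
    have hcont : ContinuousOn V (Set.Icc x 0) := fun y hy =>
      ((h y (hsub hy)).continuousAt).continuousWithinAt
    obtain ⟨c, hc, hc'⟩ := exists_hasDerivAt_eq_slope V (fun _ => 0) hlt hcont
      (fun y hy => h y (hsub ⟨le_of_lt hy.1, le_of_lt hy.2⟩))
    have hne : (0:ℝ) - x ≠ 0 := by linarith
    rcases div_eq_zero_iff.1 hc'.symm with hh | hh
    · linarith
    · exact absurd hh hne
  · rw [heq]
  · have hsub : Set.Icc 0 x ⊆ Set.Ioo (-1:ℝ) 1 := fun y hy =>
      ⟨lt_of_lt_of_le (by norm_num) hy.1, lt_of_le_of_lt hy.2 hx.2⟩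
    have hcont : ContinuousOn V (Set.Icc 0 x) := fun y hy =>
      ((h y (hsub hy)).continuousAt).continuousWithinAt
    obtain ⟨c, hc, hc'⟩ := exists_hasDerivAt_eq_slope V (fun _ => 0) hgt hcont
      (fun y hy => h y (hsub ⟨le_of_lt hy.1, le_of_lt hy.2⟩))
    have hne : x - 0 ≠ 0 := by linarith
    rcases div_eq_zero_iff.1 hc'.symm with hh | hh
    · linarith
    · exact absurd hh hne

lemma sqrt_pos_of_mem {x : ℝ} (hx : x ∈ Set.Ioo (-1:ℝ) 1) : 0 < Real.sqrt (1 - x^2) := by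
  apply Real.sqrt_pos.2
  nlinarith [hx.1, hx.2]

lemma sq_sqrt_of_mem {x : ℝ} (hx : x ∈ Set.Ioo (-1:ℝ) 1) :
    Real.sqrt (1 - x^2) ^ 2 = 1 - x^2 :=
  Real.sq_sqrt (by nlinarith [hx.1, hx.2])

lemma hasDerivAt_sqrt_one_sub_sq {x : ℝ} (hx : x ∈ Set.Ioo (-1:ℝ) 1) :
    HasDerivAt (fun y : ℝ => Real.sqrt (1 - y^2)) (-x / Real.sqrt (1 - x^2)) x := by
  have h1 : HasDerivAt (fun y : ℝ => 1 - y^2) (-(2*x)) x := by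
    simpa using ((hasDerivAt_pow 2 x).const_sub 1)
  have h2 : (1 - x^2) ≠ 0 := by nlinarith [hx.1, hx.2]
  have := (Real.hasDerivAt_sqrt h2).comp x h1
  convert this using 1
  · rfl
  · rfl
  · rfl
  have hs : Real.sqrt (1 - x^2) ≠ 0 := ne_of_gt (sqrt_pos_of_mem hx)
  field_simp

lemma summable_terms (k : ℕ) {x : ℝ} (hx : |x| < 1) :
    Summable (fun l => aa k l * x^(2*l)) := by
  have hx2 : x^2 < 1 := by
    have := abs_nonneg x
    nlinarith [sq_abs x]
  have hu : Summable (fun l : ℕ => (3 * (Nat.factorial (2*k) : ℝ)) * (((l:ℝ)+1)^(k+1) * (x^2)^l)) :=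
    (summable_poly_geom (k+1) (by positivity) hx2).mul_left _
  apply Summable.of_norm_bounded hu
  intro l
  rw [Real.norm_eq_abs, abs_mul, abs_of_nonneg (aa_nonneg k l), abs_pow]
  calc aa k l * |x|^(2*l) ≤ (3 * (Nat.factorial (2*k) : ℝ) * ((l:ℝ)+1)^(k+1)) * |x|^(2*l) := by
        apply mul_le_mul_of_nonneg_right (aa_le k l) (by positivity)
    _ = (3 * (Nat.factorial (2*k) : ℝ)) * (((l:ℝ)+1)^(k+1) * (x^2)^l) := by
        rw [pow_mul, sq_abs]; ring

lemma gd_bound (k l : ℕ) {z r : ℝ} (hz : |z| ≤ r) (hr : r ≤ 1) :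
    |aa k l * (2*(l:ℝ)) * z^(2*l-1)| ≤
      (6*(Nat.factorial (2*k) : ℝ)) * (((l:ℝ)+1)^(k+2) * (r^2)^(l-1)) := by
  have hr0 : 0 ≤ r := le_trans (abs_nonneg z) hz
  have habs : |aa k l * (2*(l:ℝ)) * z^(2*l-1)| = aa k l * (2*(l:ℝ)) * |z|^(2*l-1) := by
    rw [abs_mul, abs_mul, abs_pow, abs_of_nonneg (aa_nonneg k l),
      abs_of_nonneg (by positivity : (0:ℝ) ≤ 2*(l:ℝ))]
  rw [habs]
  have s1 : |z|^(2*l-1) ≤ r^(2*l-1) := pow_le_pow_left₀ (abs_nonneg z) hz _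
  have s2 : r^(2*l-1) ≤ (r^2)^(l-1) := by
    rw [← pow_mul]
    exact pow_le_pow_of_le_one hr0 hr (by omega)
  have s3 : aa k l * (2*(l:ℝ)) ≤ (3 * (Nat.factorial (2*k) : ℝ) * ((l:ℝ)+1)^(k+1)) * (2*((l:ℝ)+1)) := by
    apply mul_le_mul (aa_le k l) (by linarith) (by positivity) (by positivity)
  calc aa k l * (2*(l:ℝ)) * |z|^(2*l-1)
      ≤ (3 * (Nat.factorial (2*k) : ℝ) * ((l:ℝ)+1)^(k+1)) * (2*((l:ℝ)+1)) * (r^2)^(l-1) := by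
        apply mul_le_mul s3 (s1.trans s2) (by positivity) (by positivity)
    _ = (6*(Nat.factorial (2*k) : ℝ)) * (((l:ℝ)+1)^(k+2) * (r^2)^(l-1)) := by ring

lemma wd_bound (k l : ℕ) {y r : ℝ} (hy : |y| ≤ r) (hr : r < 1) :
    |aa k l * (2*(l:ℝ)) * ((2*(l:ℝ)-1) * y^(2*l-2) * Real.sqrt (1-y^2)
        - y^(2*l-1) * y / Real.sqrt (1-y^2))| ≤
      (6*(3 + 1/Real.sqrt (1-r^2))*(Nat.factorial (2*k) : ℝ)) *
        (((l:ℝ)+1)^(k+3) * (r^2)^(l-1)) := by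
  have hr0 : 0 ≤ r := le_trans (abs_nonneg y) hy
  have hy1 : |y| < 1 := lt_of_le_of_lt hy hr
  have hy2 : y^2 ≤ r^2 := by rw [← sq_abs]; exact pow_le_pow_left₀ (abs_nonneg y) hy 2
  have hrs : 0 < Real.sqrt (1-r^2) := Real.sqrt_pos.2 (by nlinarith)
  have hys : 0 < Real.sqrt (1-y^2) := Real.sqrt_pos.2 (by nlinarith [sq_abs y, abs_nonneg y])
  have hsle : Real.sqrt (1-y^2) ≤ 1 := by
    exact Real.sqrt_le_one.2 (by nlinarith [sq_nonneg y])
  have hsge : Real.sqrt (1-r^2) ≤ Real.sqrt (1-y^2) := Real.sqrt_le_sqrt (by nlinarith)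
  set B := 1/Real.sqrt (1-r^2) with hB
  have hB1 : 1/Real.sqrt (1-y^2) ≤ B := by
    apply one_div_le_one_div_of_le hrs hsge
  have hB0 : 0 < B := by positivity
  -- bound powers of |y|
  have p1 : |y|^(2*l-2) ≤ (r^2)^(l-1) := by
    rw [← pow_mul]
    have : |y|^(2*l-2) ≤ r^(2*l-2) := pow_le_pow_left₀ (abs_nonneg y) hy _
    apply this.trans
    apply pow_le_pow_of_le_one hr0 (le_of_lt hr) (by omega)
  have p2 : |y|^(2*l-1) * |y| ≤ (r^2)^(l-1) := by
    rw [← pow_succ, ← pow_mul]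
    have : |y|^(2*l-1+1) ≤ r^(2*l-1+1) := pow_le_pow_left₀ (abs_nonneg y) hy _
    apply this.trans
    apply pow_le_pow_of_le_one hr0 (le_of_lt hr) (by omega)
  -- triangle inequality on the inner bracket
  have tri : |(2*(l:ℝ)-1) * y^(2*l-2) * Real.sqrt (1-y^2) - y^(2*l-1) * y / Real.sqrt (1-y^2)|
      ≤ (2*(l:ℝ)+1) * (r^2)^(l-1) + B * (r^2)^(l-1) := by
    apply (abs_sub _ _).trans
    apply add_le_add
    · rw [abs_mul, abs_mul, abs_pow]
      have h1 : |2*(l:ℝ)-1| ≤ 2*(l:ℝ)+1 := by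
        rw [abs_le]; constructor <;> [linarith [Nat.cast_nonneg (α := ℝ) l]; linarith]
      have h2 : |Real.sqrt (1-y^2)| ≤ 1 := by
        rw [abs_of_nonneg (le_of_lt hys)]; exact hsle
      calc |2*(l:ℝ)-1| * |y|^(2*l-2) * |Real.sqrt (1-y^2)|
          ≤ (2*(l:ℝ)+1) * (r^2)^(l-1) * 1 := by
            apply mul_le_mul (mul_le_mul h1 p1 (by positivity) (by positivity)) h2 (abs_nonneg _) (by positivity)
        _ = (2*(l:ℝ)+1) * (r^2)^(l-1) := by ring
    · rw [abs_div, abs_mul, abs_pow]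
      rw [abs_of_nonneg (le_of_lt hys), div_le_iff₀ hys]
      calc |y|^(2*l-1) * |y| ≤ (r^2)^(l-1) := p2
        _ = B * (r^2)^(l-1) * Real.sqrt (1-r^2) := by
            rw [hB]; field_simp
        _ ≤ B * (r^2)^(l-1) * Real.sqrt (1-y^2) := by
            apply mul_le_mul_of_nonneg_left hsge (by positivity)
  have habs : |aa k l * (2*(l:ℝ)) * ((2*(l:ℝ)-1) * y^(2*l-2) * Real.sqrt (1-y^2)
      - y^(2*l-1) * y / Real.sqrt (1-y^2))|
      = aa k l * (2*(l:ℝ)) * |(2*(l:ℝ)-1) * y^(2*l-2) * Real.sqrt (1-y^2)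
        - y^(2*l-1) * y / Real.sqrt (1-y^2)| := by
    rw [abs_mul, abs_mul, abs_of_nonneg (aa_nonneg k l),
      abs_of_nonneg (by positivity : (0:ℝ) ≤ 2*(l:ℝ))]
  rw [habs]
  have s3 : aa k l * (2*(l:ℝ)) ≤ (3 * (Nat.factorial (2*k) : ℝ) * ((l:ℝ)+1)^(k+1)) * (2*((l:ℝ)+1)) := by
    apply mul_le_mul (aa_le k l) (by linarith) (by positivity) (by positivity)
  have tri' : (2*(l:ℝ)+1) * (r^2)^(l-1) + B * (r^2)^(l-1) ≤ ((3+B)*((l:ℝ)+1)) * (r^2)^(l-1) := by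
    have : (2*(l:ℝ)+1) + B ≤ (3+B)*((l:ℝ)+1) := by nlinarith [Nat.cast_nonneg (α := ℝ) l, hB0]
    nlinarith [pow_nonneg (sq_nonneg r) (l-1)]
  calc aa k l * (2*(l:ℝ)) * |(2*(l:ℝ)-1) * y^(2*l-2) * Real.sqrt (1-y^2)
        - y^(2*l-1) * y / Real.sqrt (1-y^2)|
      ≤ (3 * (Nat.factorial (2*k) : ℝ) * ((l:ℝ)+1)^(k+1)) * (2*((l:ℝ)+1)) * (((3+B)*((l:ℝ)+1)) * (r^2)^(l-1)) := by
        apply mul_le_mul s3 (tri.trans tri') (abs_nonneg _) (by positivity)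
    _ = (6*(3 + B)*(Nat.factorial (2*k) : ℝ)) * (((l:ℝ)+1)^(k+3) * (r^2)^(l-1)) := by ring

lemma hasDerivAt_gterm (k l : ℕ) (z : ℝ) :
    HasDerivAt (fun y => aa k l * y^(2*l)) (aa k l * (2*(l:ℝ)) * z^(2*l-1)) z := by
  have := (hasDerivAt_pow (2*l) z).const_mul (aa k l)
  convert this using 1
  · rfl
  · rfl
  push_cast
  ring

lemma hasDerivAt_wterm (k l : ℕ) {z : ℝ} (hz : z ∈ Set.Ioo (-1:ℝ) 1) :
    HasDerivAt (fun y => aa k l * (2*(l:ℝ)) * y^(2*l-1) * Real.sqrt (1-y^2))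
      (aa k l * (2*(l:ℝ)) * ((2*(l:ℝ)-1) * z^(2*l-2) * Real.sqrt (1-z^2)
        - z^(2*l-1) * z / Real.sqrt (1-z^2))) z := by
  rcases l with _ | l
  · have heq : (fun y : ℝ => aa k 0 * (2*((0:ℕ):ℝ)) * y^(2*0-1) * Real.sqrt (1-y^2))
        = fun _ => 0 := by
      funext y; norm_num
    rw [heq]
    have h0 : aa k 0 * (2*((0:ℕ):ℝ)) * ((2*((0:ℕ):ℝ)-1) * z^(2*0-2) * Real.sqrt (1-z^2)
        - z^(2*0-1) * z / Real.sqrt (1-z^2)) = 0 := by norm_num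
    rw [h0]
    exact hasDerivAt_const z 0
  · have hp : HasDerivAt (fun y : ℝ => y^(2*(l+1)-1)) (((2*(l+1)-1:ℕ):ℝ) * z^(2*(l+1)-1-1)) z :=
      hasDerivAt_pow _ z
    have hs := hasDerivAt_sqrt_one_sub_sq hz
    have := (hp.mul hs).const_mul (aa k (l+1) * (2*((l+1:ℕ):ℝ)))
    have heq : (fun y : ℝ => aa k (l+1) * (2*((l+1:ℕ):ℝ)) * y^(2*(l+1)-1) * Real.sqrt (1-y^2))
        = fun y : ℝ => aa k (l+1) * (2*((l+1:ℕ):ℝ)) * (y^(2*(l+1)-1) * Real.sqrt (1-y^2)) := by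
      funext y; ring
    rw [heq]
    convert this using 1
    · rfl
    · rfl
    · rfl
    have e1 : 2*(l+1)-1 = 2*l+1 := by omega
    have e2 : 2*(l+1)-2 = 2*l := by omega
    rw [e1, e2]
    have e3 : 2*l+1-1 = 2*l := by omega
    rw [e3]
    push_cast
    ring

lemma summable_sq_terms (k : ℕ) {x : ℝ} (hx : |x| < 1) :
    Summable (fun l : ℕ => 4*(l:ℝ)^2 * (aa k l * x^(2*l))) := by
  have hx2 : x^2 < 1 := by nlinarith [sq_abs x, abs_nonneg x]
  have hu : Summable (fun l : ℕ => (12 * (Nat.factorial (2*k) : ℝ)) * (((l:ℝ)+1)^(k+3) * (x^2)^l)) :=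
    (summable_poly_geom (k+3) (by positivity) hx2).mul_left _
  apply Summable.of_norm_bounded hu
  intro l
  rw [Real.norm_eq_abs, abs_mul, abs_of_nonneg (by positivity : (0:ℝ) ≤ 4*(l:ℝ)^2),
    abs_mul, abs_of_nonneg (aa_nonneg k l), abs_pow]
  have h1 : aa k l * |x|^(2*l) ≤ (3 * (Nat.factorial (2*k) : ℝ) * ((l:ℝ)+1)^(k+1)) * (x^2)^l := by
    calc aa k l * |x|^(2*l) ≤ (3 * (Nat.factorial (2*k) : ℝ) * ((l:ℝ)+1)^(k+1)) * |x|^(2*l) :=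
          mul_le_mul_of_nonneg_right (aa_le k l) (by positivity)
      _ = (3 * (Nat.factorial (2*k) : ℝ) * ((l:ℝ)+1)^(k+1)) * (x^2)^l := by
          rw [pow_mul, sq_abs]
  have h2 : 4*(l:ℝ)^2 ≤ 4*((l:ℝ)+1)^2 := by nlinarith [Nat.cast_nonneg (α := ℝ) l]
  calc 4*(l:ℝ)^2 * (aa k l * |x|^(2*l))
      ≤ 4*((l:ℝ)+1)^2 * ((3 * (Nat.factorial (2*k) : ℝ) * ((l:ℝ)+1)^(k+1)) * (x^2)^l) := by
        apply mul_le_mul h2 h1 (mul_nonneg (aa_nonneg k l) (by positivity)) (by positivity)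
    _ = (12 * (Nat.factorial (2*k) : ℝ)) * (((l:ℝ)+1)^(k+3) * (x^2)^l) := by ring

lemma main_open (k : ℕ) : ∀ x ∈ Set.Ioo (-1:ℝ) 1,
    HasSum (fun l => aa k l * x^(2*l)) (Real.arcsin x ^ (2*k)) := by
  induction k with
  | zero =>
    intro x hx
    have h2 := hasSum_single (f := fun l => aa 0 l * x^(2*l)) 0 (by
      intro b hb
      rcases b with _ | b
      · exact absurd rfl hb
      · show aa 0 (b+1) * x^(2*(b+1)) = 0
        unfold aa; rw [bInt_zero_left]; norm_num)
    have h3 : aa 0 0 * x^(2*0) = 1 := by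
      unfold aa; rw [bInt_zero_zero]; norm_num [Nat.factorial]
    convert h2 using 1
    show Real.arcsin x ^ (2*0) = aa 0 0 * x^(2*0)
    rw [h3]
    norm_num
  | succ k IH =>
    -- termwise-differentiated series of G
    have hG : ∀ y ∈ Set.Ioo (-1:ℝ) 1,
        HasDerivAt (fun z => ∑' l, aa (k+1) l * z^(2*l))
          (∑' l, aa (k+1) l * (2*(l:ℝ)) * y^(2*l-1)) y := by
      intro y hy
      have hy1 : |y| < 1 := abs_lt.2 ⟨hy.1, hy.2⟩
      set r : ℝ := (1+|y|)/2 with hrdef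
      have hyr : |y| < r := by rw [hrdef]; linarith
      have hr1 : r < 1 := by rw [hrdef]; linarith
      have hr0 : (0:ℝ) ≤ r := by rw [hrdef]; positivity
      have hrr : r^2 < 1 := by nlinarith [abs_nonneg y]
      have hu : Summable (fun l : ℕ =>
          (6*(Nat.factorial (2*(k+1)) : ℝ)) * (((l:ℝ)+1)^((k+1)+2) * (r^2)^(l-1))) :=
        (summable_poly_geom' ((k+1)+2) (by positivity) hrr).mul_left _
      refine hasDerivAt_tsum_of_isPreconnected (y₀ := y) hu Metric.isOpen_ball
        (convex_ball (0:ℝ) r).isPreconnected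
        (fun l z _ => hasDerivAt_gterm (k+1) l z) ?_ ?_ ?_ ?_
      · intro l z hz
        rw [mem_ball_zero_iff, Real.norm_eq_abs] at hz
        rw [Real.norm_eq_abs]
        exact gd_bound (k+1) l hz.le hr1.le
      · exact mem_ball_zero_iff.2 (by rw [Real.norm_eq_abs]; exact hyr)
      · exact summable_terms (k+1) hy1
      · exact mem_ball_zero_iff.2 (by rw [Real.norm_eq_abs]; exact hyr)
    -- termwise-differentiated series of W
    have hW : ∀ y ∈ Set.Ioo (-1:ℝ) 1,
        HasDerivAt (fun z => ∑' l, aa (k+1) l * (2*(l:ℝ)) * z^(2*l-1) * Real.sqrt (1-z^2))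
          (∑' l, aa (k+1) l * (2*(l:ℝ)) * ((2*(l:ℝ)-1) * y^(2*l-2) * Real.sqrt (1-y^2)
            - y^(2*l-1) * y / Real.sqrt (1-y^2))) y := by
      intro y hy
      have hy1 : |y| < 1 := abs_lt.2 ⟨hy.1, hy.2⟩
      set r : ℝ := (1+|y|)/2 with hrdef
      have hyr : |y| < r := by rw [hrdef]; linarith
      have hr1 : r < 1 := by rw [hrdef]; linarith
      have hr0 : (0:ℝ) ≤ r := by rw [hrdef]; positivity
      have hrr : r^2 < 1 := by nlinarith [abs_nonneg y]
      have hu : Summable (fun l : ℕ =>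
          (6*(3 + 1/Real.sqrt (1-r^2))*(Nat.factorial (2*(k+1)) : ℝ))
            * (((l:ℝ)+1)^((k+1)+3) * (r^2)^(l-1))) :=
        (summable_poly_geom' ((k+1)+3) (by positivity) hrr).mul_left _
      have hsummy : Summable (fun l : ℕ => aa (k+1) l * (2*(l:ℝ)) * y^(2*l-1) * Real.sqrt (1-y^2)) := by
        apply Summable.mul_right
        apply Summable.of_norm_bounded
          ((summable_poly_geom' ((k+1)+2) (by positivity) hrr).mul_left
            (6*(Nat.factorial (2*(k+1)) : ℝ)))
        intro l
        rw [Real.norm_eq_abs]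
        exact gd_bound (k+1) l hyr.le hr1.le
      refine hasDerivAt_tsum_of_isPreconnected (y₀ := y) hu Metric.isOpen_ball
        (convex_ball (0:ℝ) r).isPreconnected
        (fun l z hz => hasDerivAt_wterm (k+1) l ?_) ?_ ?_ hsummy ?_
      · rw [mem_ball_zero_iff, Real.norm_eq_abs] at hz
        exact Set.mem_Ioo.2 (abs_lt.1 (hz.trans hr1))
      · intro l z hz
        rw [mem_ball_zero_iff, Real.norm_eq_abs] at hz
        rw [Real.norm_eq_abs]
        exact wd_bound (k+1) l hz.le hr1
      · exact mem_ball_zero_iff.2 (by rw [Real.norm_eq_abs]; exact hyr)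
      · exact mem_ball_zero_iff.2 (by rw [Real.norm_eq_abs]; exact hyr)
    -- the sum of the termwise derivatives of W
    have hwdsum : ∀ x ∈ Set.Ioo (-1:ℝ) 1,
        HasSum (fun l => aa (k+1) l * (2*(l:ℝ)) * ((2*(l:ℝ)-1) * x^(2*l-2) * Real.sqrt (1-x^2)
            - x^(2*l-1) * x / Real.sqrt (1-x^2)))
          ((2*(k:ℝ)+2)*(2*(k:ℝ)+1) * Real.arcsin x ^(2*k) / Real.sqrt (1-x^2)) := by
      intro x hx
      have hx1 : |x| < 1 := abs_lt.2 ⟨hx.1, hx.2⟩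
      have hs := sqrt_pos_of_mem hx
      have hs2 := sq_sqrt_of_mem hx
      have hsne : Real.sqrt (1-x^2) ≠ 0 := ne_of_gt hs
      have hIH := IH x hx
      have hcs : Summable (fun l : ℕ => 4*(l:ℝ)^2 * (aa (k+1) l * x^(2*l))) :=
        summable_sq_terms (k+1) hx1
      have hC := hcs.hasSum
      have hC1 : HasSum (fun l : ℕ => 4*((l+1:ℕ):ℝ)^2 * (aa (k+1) (l+1) * x^(2*(l+1))))
          (∑' l : ℕ, 4*(l:ℝ)^2 * (aa (k+1) l * x^(2*l))) := by
        apply (hasSum_nat_add_iff (f := fun l : ℕ => 4*(l:ℝ)^2 * (aa (k+1) l * x^(2*l))) 1).2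
        convert hC using 1
        · rfl
        rw [Finset.range_one, Finset.sum_singleton]
        norm_num
      have h1 : HasSum (fun l => (2*(k:ℝ)+2)*(2*(k:ℝ)+1) * (aa k l * x^(2*l))
            + (4*(l:ℝ)^2 * (aa (k+1) l * x^(2*l)) - 4*((l+1:ℕ):ℝ)^2 * (aa (k+1) (l+1) * x^(2*(l+1)))))
          ((2*(k:ℝ)+2)*(2*(k:ℝ)+1) * Real.arcsin x ^(2*k)
            + ((∑' l : ℕ, 4*(l:ℝ)^2 * (aa (k+1) l * x^(2*l)))
              - (∑' l : ℕ, 4*(l:ℝ)^2 * (aa (k+1) l * x^(2*l))))) :=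
        (hIH.mul_left _).add (hC.sub hC1)
      have h2 := h1.mul_left (1/Real.sqrt (1-x^2))
      have heq : (fun l => (1/Real.sqrt (1-x^2)) * ((2*(k:ℝ)+2)*(2*(k:ℝ)+1) * (aa k l * x^(2*l))
            + (4*(l:ℝ)^2 * (aa (k+1) l * x^(2*l)) - 4*((l+1:ℕ):ℝ)^2 * (aa (k+1) (l+1) * x^(2*(l+1))))))
          = fun l => aa (k+1) (l+1) * (2*((l+1:ℕ):ℝ)) * ((2*((l+1:ℕ):ℝ)-1) * x^(2*(l+1)-2) * Real.sqrt (1-x^2)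
            - x^(2*(l+1)-1) * x / Real.sqrt (1-x^2)) := by
        funext l
        have hrec := aa_rec k l
        have e2 : 2*(l+1)-2 = 2*l := by omega
        have e1 : 2*(l+1)-1 = 2*l+1 := by omega
        rw [e1, e2]
        have e3 : 2*(l+1) = 2*l+2 := by omega
        rw [e3]
        push_cast
        rw [eq_comm]
        field_simp
        linear_combination (x^(2*l)) * hrec
          + (aa (k+1) (l+1) * (2*(l:ℝ)+2) * (2*(l:ℝ)+1) * x^(2*l)) * hs2
      rw [heq] at h2
      have h3 := (hasSum_nat_add_iff
        (f := fun l => aa (k+1) l * (2*(l:ℝ)) * ((2*(l:ℝ)-1) * x^(2*l-2) * Real.sqrt (1-x^2)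
            - x^(2*l-1) * x / Real.sqrt (1-x^2))) 1).1 h2
      convert h3 using 1
      · rfl
      rw [Finset.range_one, Finset.sum_singleton]
      norm_num
      field_simp
    -- derivative of arcsin powers
    have harc : ∀ y ∈ Set.Ioo (-1:ℝ) 1, ∀ n : ℕ,
        HasDerivAt (fun z => Real.arcsin z ^ n)
          ((n:ℝ) * Real.arcsin y ^ (n-1) * (1/Real.sqrt (1-y^2))) y := by
      intro y hy n
      exact (Real.hasDerivAt_arcsin hy.1.ne' hy.2.ne).pow n
    -- constancy of V
    have hVconst : ∀ y ∈ Set.Ioo (-1:ℝ) 1,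
        ((∑' l, aa (k+1) l * (2*(l:ℝ)) * y^(2*l-1) * Real.sqrt (1-y^2))
          - (2*(k:ℝ)+2) * Real.arcsin y ^ (2*k+1))
        = ((∑' l, aa (k+1) l * (2*(l:ℝ)) * (0:ℝ)^(2*l-1) * Real.sqrt (1-(0:ℝ)^2))
          - (2*(k:ℝ)+2) * Real.arcsin 0 ^ (2*k+1)) := by
      intro y hy
      refine const_of_deriv (fun u => (∑' l, aa (k+1) l * (2*(l:ℝ)) * u^(2*l-1) * Real.sqrt (1-u^2))
        - (2*(k:ℝ)+2) * Real.arcsin u ^ (2*k+1)) (fun z hz => ?_) hy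
      have hd1 := hW z hz
      have hd2 := (harc z hz (2*k+1)).const_mul (2*(k:ℝ)+2)
      have hd := hd1.sub hd2
      convert hd using 1
      · rfl
      · rfl
      · rfl
      rw [(hwdsum z hz).tsum_eq]
      have e : 2*k+1-1 = 2*k := by omega
      rw [e]
      have hsne : Real.sqrt (1-z^2) ≠ 0 := ne_of_gt (sqrt_pos_of_mem hz)
      field_simp
      push_cast
      ring
    have hW0 : (∑' l, aa (k+1) l * (2*(l:ℝ)) * (0:ℝ)^(2*l-1) * Real.sqrt (1-(0:ℝ)^2)) = 0 := by
      have hfz : (fun l : ℕ => aa (k+1) l * (2*(l:ℝ)) * (0:ℝ)^(2*l-1) * Real.sqrt (1-(0:ℝ)^2))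
          = fun _ => 0 := by
        funext l
        rcases l with _ | l
        · norm_num
        · rw [zero_pow (show 2*(l+1)-1 ≠ 0 by omega)]; ring
      rw [hfz, tsum_zero]
    have hWeq : ∀ y ∈ Set.Ioo (-1:ℝ) 1,
        (∑' l, aa (k+1) l * (2*(l:ℝ)) * y^(2*l-1)) * Real.sqrt (1-y^2)
          = (2*(k:ℝ)+2) * Real.arcsin y ^ (2*k+1) := by
      intro y hy
      have h := hVconst y hy
      rw [hW0, Real.arcsin_zero, zero_pow (show 2*k+1 ≠ 0 by omega)] at h
      have htm : (∑' l, aa (k+1) l * (2*(l:ℝ)) * y^(2*l-1) * Real.sqrt (1-y^2))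
          = (∑' l, aa (k+1) l * (2*(l:ℝ)) * y^(2*l-1)) * Real.sqrt (1-y^2) := tsum_mul_right
      rw [htm] at h
      linarith [h]
    -- constancy of U
    intro x hx
    have hx1 : |x| < 1 := abs_lt.2 ⟨hx.1, hx.2⟩
    have hUconst := const_of_deriv
      (fun z => (∑' l, aa (k+1) l * z^(2*l)) - Real.arcsin z ^ (2*(k+1)))
      (fun z hz => by
        have hd1 := hG z hz
        have hd2 := harc z hz (2*(k+1))
        have hd := hd1.sub hd2
        convert hd using 1
        · rfl
        · rfl
        · rfl
        have hsp := sqrt_pos_of_mem hz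
        have hsne : Real.sqrt (1-z^2) ≠ 0 := ne_of_gt hsp
        have hDz : (∑' l, aa (k+1) l * (2*(l:ℝ)) * z^(2*l-1))
            = (2*(k:ℝ)+2) * Real.arcsin z ^ (2*k+1) / Real.sqrt (1-z^2) := by
          rw [eq_div_iff hsne]
          exact hWeq z hz
        rw [hDz]
        have e : 2*(k+1)-1 = 2*k+1 := by omega
        rw [e]
        push_cast
        field_simp
        ring) hx
    have hU0 : (∑' l, aa (k+1) l * (0:ℝ)^(2*l)) - Real.arcsin 0 ^ (2*(k+1)) = 0 := by
      have hfz : (fun l : ℕ => aa (k+1) l * (0:ℝ)^(2*l)) = fun _ => 0 := by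
        funext l
        rcases l with _ | l
        · rw [aa_zero]; ring
        · rw [zero_pow (show 2*(l+1) ≠ 0 by omega)]; ring
      rw [hfz, tsum_zero, Real.arcsin_zero, zero_pow (show 2*(k+1) ≠ 0 by omega)]
      ring
    have hUval : (∑' l, aa (k+1) l * x^(2*l)) = Real.arcsin x ^ (2*(k+1)) := by
      have h4 : (∑' l, aa (k+1) l * x^(2*l)) - Real.arcsin x ^ (2*(k+1))
          = (∑' l, aa (k+1) l * (0:ℝ)^(2*l)) - Real.arcsin 0 ^ (2*(k+1)) := hUconst
      linarith [hU0, h4]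
    have hsum := (summable_terms (k+1) hx1).hasSum
    rw [hUval] at hsum
    exact hsum

open Filter Topology

lemma endpoint (k : ℕ) : HasSum (fun l => aa k l) ((Real.pi/2)^(2*k)) := by
  have hIoo : Set.Ioo (0:ℝ) 1 ∈ 𝓝[<] (1:ℝ) :=
    Ioo_mem_nhdsLT_of_mem (by constructor <;> norm_num)
  have hb : ∀ n : ℕ, ∑ l ∈ Finset.range n, aa k l ≤ (Real.pi/2)^(2*k) := by
    intro n
    have hcont : Tendsto (fun x : ℝ => ∑ l ∈ Finset.range n, aa k l * x^(2*l)) (𝓝[<] (1:ℝ))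
        (𝓝 (∑ l ∈ Finset.range n, aa k l * (1:ℝ)^(2*l))) := by
      apply Tendsto.mono_left _ nhdsWithin_le_nhds
      exact Continuous.tendsto (by continuity) 1
    have hval : (∑ l ∈ Finset.range n, aa k l * (1:ℝ)^(2*l)) = ∑ l ∈ Finset.range n, aa k l := by
      apply Finset.sum_congr rfl
      intro l _
      rw [one_pow, mul_one]
    rw [hval] at hcont
    refine le_of_tendsto hcont ?_
    filter_upwards [hIoo] with x hx
    have hx' : x ∈ Set.Ioo (-1:ℝ) 1 := ⟨by linarith [hx.1], hx.2⟩
    have hsum := main_open k x hx'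
    have h1 : ∑ l ∈ Finset.range n, aa k l * x^(2*l) ≤ Real.arcsin x ^ (2*k) :=
      sum_le_hasSum (Finset.range n) (fun l _ => mul_nonneg (aa_nonneg k l) (pow_nonneg (by linarith [hx.1]) _)) hsum
    have h2 : Real.arcsin x ^ (2*k) ≤ (Real.pi/2)^(2*k) := by
      apply pow_le_pow_left₀ (Real.arcsin_nonneg.2 hx.1.le)
      exact Real.arcsin_le_pi_div_two x
    linarith
  have hsummable : Summable (fun l => aa k l) :=
    summable_of_sum_range_le (fun l => aa_nonneg k l) hb
  have hle : ∑' l, aa k l ≤ (Real.pi/2)^(2*k) := hsummable.tsum_le_of_sum_range_le hb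
  have hge : (Real.pi/2)^(2*k) ≤ ∑' l, aa k l := by
    have harc : Tendsto (fun x : ℝ => Real.arcsin x ^(2*k)) (𝓝[<] (1:ℝ))
        (𝓝 ((Real.pi/2)^(2*k))) := by
      have h := ((Real.continuous_arcsin.pow (2*k)).tendsto 1).mono_left
        (nhdsWithin_le_nhds (a := (1:ℝ)) (s := Set.Iio 1))
      rw [Pi.pow_apply, Real.arcsin_one] at h
      exact h
    refine le_of_tendsto harc ?_
    filter_upwards [hIoo] with x hx
    have hx' : x ∈ Set.Ioo (-1:ℝ) 1 := ⟨by linarith [hx.1], hx.2⟩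
    have hsum := main_open k x hx'
    rw [← hsum.tsum_eq]
    apply Summable.tsum_le_tsum _ hsum.summable hsummable
    intro l
    calc aa k l * x^(2*l) ≤ aa k l * 1 := by
          apply mul_le_mul_of_nonneg_left _ (aa_nonneg k l)
          exact pow_le_one₀ (by linarith [hx.1]) hx.2.le
      _ = aa k l := mul_one _
  have hval : ∑' l, aa k l = (Real.pi/2)^(2*k) := le_antisymm hle hge
  exact hval ▸ hsummable.hasSum


/-- **Sublemma 1 of the paper.** For every `k ≥ 0` and `x ∈ [−1,1]`,
`(arcsin x)^{2k} = ∑_{l≥0} ((2k)!/(2l)!) 2^{2l−2k} b_{k,l} x^{2l}`. -/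
theorem arcsin_even_power_series
    (k : ℕ) (x : ℝ) (hx : x ∈ Set.Icc (-1 : ℝ) 1) :
    HasSum
      (fun l : ℕ =>
        (Nat.factorial (2 * k) : ℝ) / (Nat.factorial (2 * l) : ℝ) *
          (2 : ℝ) ^ (2 * (l : ℤ) - 2 * (k : ℤ)) * (bInt k l : ℝ) * x ^ (2 * l))
      ((Real.arcsin x) ^ (2 * k)) := by
  have hfun : (fun l : ℕ =>
      (Nat.factorial (2 * k) : ℝ) / (Nat.factorial (2 * l) : ℝ) *
        (2 : ℝ) ^ (2 * (l : ℤ) - 2 * (k : ℤ)) * (bInt k l : ℝ) * x ^ (2 * l))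
      = fun l : ℕ => aa k l * x ^ (2 * l) := by
    funext l
    rw [aa_eq]
  rw [hfun]
  rcases eq_or_lt_of_le hx.1 with h1 | h1
  · -- x = -1
    have hx1 : x = -1 := h1.symm
    subst hx1
    have hf2 : (fun l : ℕ => aa k l * (-1:ℝ) ^ (2 * l)) = fun l => aa k l := by
      funext l
      rw [pow_mul]
      norm_num
    rw [hf2]
    have hv : Real.arcsin (-1) ^ (2*k) = (Real.pi/2)^(2*k) := by
      rw [Real.arcsin_neg, Real.arcsin_one, pow_mul, pow_mul]
      norm_num
    rw [hv]
    exact endpoint k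
  · rcases eq_or_lt_of_le hx.2 with h2 | h2
    · -- x = 1
      subst h2
      have hf2 : (fun l : ℕ => aa k l * (1:ℝ) ^ (2 * l)) = fun l => aa k l := by
        funext l
        rw [one_pow, mul_one]
      rw [hf2, Real.arcsin_one]
      exact endpoint k
    · exact main_open k x ⟨h1, h2⟩
end

section
/- Let n be a positive integer and define f : [0, 1) → ℝ by f(t) = cos((2n−1)·arcsin(√t)). Then for every integer k ≥ n and every t ∈ [0, 1), one has (−1)^n · f^(k)(t) > 0, where f^(k) denotes the k-th derivative of f. -/
open Real Set Finset

noncomputable def E : ℕ → ℕ → ℝ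
  | 0, 0 => 1
  | 0, _+1 => 0
  | 1, 0 => 3
  | 1, 1 => 4
  | 1, _+2 => 0
  | (m+2), 0 => 2 * E (m+1) 0 - E m 0
  | (m+2), (i+1) => 4 * E (m+1) i + 2 * E (m+1) (i+1) - E m (i+1)

theorem E_eq_zero : ∀ m i, m < i → E m i = 0
  | 0, _+1, _ => rfl
  | 1, 0, h => absurd h (by omega)
  | 1, 1, h => absurd h (by omega)
  | 1, _+2, _ => rfl
  | m+2, 0, h => absurd h (by omega)
  | m+2, i+1, h => by
      show 4 * E (m+1) i + 2 * E (m+1) (i+1) - E m (i+1) = 0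
      rw [E_eq_zero (m+1) i (by omega), E_eq_zero (m+1) (i+1) (by omega),
        E_eq_zero m (i+1) (by omega)]
      ring

theorem E_aux : ∀ m, (∀ i, i ≤ m → 0 < E m i) ∧ (∀ i, E m i ≤ E (m+1) i)
  | 0 => by
      constructor
      · intro i hi; interval_cases i; · show (0:ℝ) < 1; norm_num
      · intro i
        match i with
        | 0 => show (1:ℝ) ≤ 3; norm_num
        | 1 => show (0:ℝ) ≤ 4; norm_num
        | (i+2) => show (0:ℝ) ≤ 0; norm_num
  | 1 => by
      constructor
      · intro i hi; interval_cases i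
        · show (0:ℝ) < 3; norm_num
        · show (0:ℝ) < 4; norm_num
      · intro i
        match i with
        | 0 => show (3:ℝ) ≤ 2 * E 1 0 - E 0 0; show (3:ℝ) ≤ 2*3-1; norm_num
        | 1 => show (4:ℝ) ≤ 4 * E 1 0 + 2 * E 1 1 - E 0 1
               show (4:ℝ) ≤ 4*3 + 2*4 - 0; norm_num
        | 2 => show (0:ℝ) ≤ 4 * E 1 1 + 2 * E 1 2 - E 0 2
               show (0:ℝ) ≤ 4*4 + 2*0 - 0; norm_num
        | (i+3) => show (0:ℝ) ≤ 4 * E 1 (i+2) + 2 * E 1 (i+3) - E 0 (i+3)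
                   rw [E_eq_zero 1 (i+2) (by omega), E_eq_zero 1 (i+3) (by omega),
                     E_eq_zero 0 (i+3) (by omega)]; norm_num
  | (m+2) => by
      obtain ⟨hP, hM⟩ := E_aux m
      obtain ⟨hP1, hM1⟩ := E_aux (m+1)
      have hPnew : ∀ i, i ≤ m+2 → 0 < E (m+2) i := by
        intro i hi
        rcases Nat.lt_or_ge i (m+2) with h | h
        · exact lt_of_lt_of_le (hP1 i (by omega)) (hM1 i)
        · have hi2 : i = m+2 := by omega
          subst hi2
          show 0 < 4 * E (m+1) (m+1) + 2 * E (m+1) (m+2) - E m (m+2)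
          rw [E_eq_zero (m+1) (m+2) (by omega), E_eq_zero m (m+2) (by omega)]
          have := hP1 (m+1) le_rfl
          linarith
      have hnn : ∀ i, 0 ≤ E (m+2) i := by
        intro i
        rcases le_or_gt i (m+2) with h | h
        · exact le_of_lt (hPnew i h)
        · rw [E_eq_zero (m+2) i h]
      refine ⟨hPnew, ?_⟩
      intro i
      match i with
      | 0 =>
        show E (m+2) 0 ≤ 2 * E (m+2) 0 - E (m+1) 0
        have := hM1 0
        linarith
      | (i+1) =>
        show E (m+2) (i+1) ≤ 4 * E (m+2) i + 2 * E (m+2) (i+1) - E (m+1) (i+1)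
        have h1 := hM1 (i+1)
        have h2 := hnn i
        have h3 := hnn (i+1)
        linarith

noncomputable def C' (m i : ℕ) : ℝ := (-1) ^ (m + i) * E m i

theorem C'_eq_zero (m i : ℕ) (h : m < i) : C' m i = 0 := by
  rw [C', E_eq_zero m i h, mul_zero]

theorem C'_rec_zero (m : ℕ) : C' (m+2) 0 = -2 * C' (m+1) 0 - C' m 0 := by
  show (-1:ℝ) ^ (m+2+0) * (2 * E (m+1) 0 - E m 0) = _
  rw [C', C']
  rw [show m+2+0 = (m+1+0)+1 by ring, show m+1+0 = (m+0)+1 by ring]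
  ring

theorem C'_rec_succ (m i : ℕ) :
    C' (m+2) (i+1) = 4 * C' (m+1) i - 2 * C' (m+1) (i+1) - C' m (i+1) := by
  show (-1:ℝ) ^ (m+2+(i+1)) * (4 * E (m+1) i + 2 * E (m+1) (i+1) - E m (i+1)) = _
  rw [C', C', C']
  rw [show m+2+(i+1) = (m+1+i)+2 by ring, show m+1+(i+1) = (m+1+i)+1 by ring,
    show m+(i+1) = (m+1+i) by ring]
  ring

noncomputable def W (i k : ℕ) : ℝ := ∏ j ∈ Finset.range k, ((j : ℝ) - i - 1/2)

theorem W_sign_le (i : ℕ) : ∀ q, q ≤ i + 1 → 0 < (-1:ℝ) ^ q * W i q := by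
  intro q
  induction q with
  | zero => intro _; simp [W]
  | succ q ih =>
    intro hq
    have h1 := ih (by omega)
    have hf : ((q:ℝ) - i - 1/2) < 0 := by
      have : (q:ℝ) ≤ i := by exact_mod_cast (by omega : q ≤ i)
      linarith
    rw [W, Finset.prod_range_succ, ← W]
    calc (0:ℝ) < ((-1) ^ q * W i q) * (-((q:ℝ) - i - 1/2)) := mul_pos h1 (by linarith)
    _ = (-1) ^ (q+1) * (W i q * ((q:ℝ) - i - 1/2)) := by ring

theorem W_sign (i : ℕ) : ∀ k, i + 1 ≤ k → 0 < (-1:ℝ) ^ (i+1) * W i k := by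
  intro k
  induction k with
  | zero => omega
  | succ k ih =>
    intro hk
    rcases Nat.lt_or_ge i (k) with h | h
    · have h1 := ih (by omega)
      have hf : 0 < ((k:ℝ) - i - 1/2) := by
        have : (i:ℝ) + 1 ≤ k := by exact_mod_cast (by omega : i + 1 ≤ k)
        linarith
      rw [W, Finset.prod_range_succ, ← W]
      calc (0:ℝ) < ((-1) ^ (i+1) * W i k) * ((k:ℝ) - i - 1/2) := mul_pos h1 hf
      _ = (-1) ^ (i+1) * (W i k * ((k:ℝ) - i - 1/2)) := by ring
    · have : k + 1 = i + 1 := by omega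
      rw [this]
      exact W_sign_le i (i+1) le_rfl

theorem sum_shift (g : ℕ → ℝ) (p : ℕ) :
    ∑ i ∈ Finset.range p, g (i+1) = ∑ i ∈ Finset.range p, g i + g p - g 0 := by
  have h1 := Finset.sum_range_succ' g p
  have h2 := Finset.sum_range_succ g p
  linarith

theorem sum_pad (p q : ℕ) (h : p ≤ q) (v : ℕ → ℝ) :
    ∑ i ∈ Finset.range (p+1), C' p i * v i = ∑ i ∈ Finset.range (q+1), C' p i * v i := by
  refine Finset.sum_subset (Finset.range_subset_range.mpr (by omega)) ?_
  intro i _ hi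
  rw [Finset.mem_range, not_lt] at hi
  rw [C'_eq_zero p i (by omega), zero_mul]

theorem cos_arcsin_sqrt' (t : ℝ) (ht : t ∈ Set.Ico (0:ℝ) 1) :
    Real.cos (Real.arcsin (Real.sqrt t)) = Real.sqrt (1 - t) := by
  rw [Real.cos_arcsin, Real.sq_sqrt ht.1]

theorem identity : ∀ m : ℕ, ∀ t ∈ Set.Ico (0:ℝ) 1,
    Real.cos ((2*(m:ℝ)+1) * Real.arcsin (Real.sqrt t)) =
      ∑ i ∈ Finset.range (m+1), C' m i * ((1-t)^i * Real.sqrt (1-t))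
  | 0 => by
      intro t ht
      have hcos := cos_arcsin_sqrt' t ht
      simp only [Nat.cast_zero, Finset.sum_range_one]
      norm_num [hcos]
      rw [C', show E 0 0 = (1:ℝ) from rfl]
      norm_num
  | 1 => by
      intro t ht
      have hcos := cos_arcsin_sqrt' t ht
      have hu : (0:ℝ) ≤ 1 - t := by linarith [ht.2]
      have hsq : Real.sqrt (1-t) ^ 2 = 1 - t := Real.sq_sqrt hu
      have h3 : (2*((1:ℕ):ℝ)+1) * Real.arcsin (Real.sqrt t)
          = 3 * Real.arcsin (Real.sqrt t) := by norm_num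
      rw [h3, Real.cos_three_mul, hcos]
      rw [Finset.sum_range_succ, Finset.sum_range_one]
      show 4 * Real.sqrt (1-t) ^ 3 - 3 * Real.sqrt (1-t)
          = (-1:ℝ)^(1+0) * E 1 0 * ((1-t)^0 * Real.sqrt (1-t))
            + (-1:ℝ)^(1+1) * E 1 1 * ((1-t)^1 * Real.sqrt (1-t))
      show 4 * Real.sqrt (1-t) ^ 3 - 3 * Real.sqrt (1-t)
          = (-1:ℝ)^(1+0) * 3 * ((1-t)^0 * Real.sqrt (1-t))
            + (-1:ℝ)^(1+1) * 4 * ((1-t)^1 * Real.sqrt (1-t))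
      have : Real.sqrt (1-t) ^ 3 = (1-t) * Real.sqrt (1-t) := by
        rw [pow_succ, hsq]
      rw [this]; ring
  | (m+2) => by
      intro t ht
      have IH1 := identity (m+1) t ht
      have IH0 := identity m t ht
      have hcos := cos_arcsin_sqrt' t ht
      have hu : (0:ℝ) ≤ 1 - t := by linarith [ht.2]
      set θ := Real.arcsin (Real.sqrt t) with hθ
      have hcos2 : Real.cos (2*θ) = 2*(1-t) - 1 := by
        rw [Real.cos_two_mul, hcos, Real.sq_sqrt hu]
      have key : Real.cos ((2*((m+2:ℕ):ℝ)+1) * θ)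
          = 2*(2*(1-t)-1) * Real.cos ((2*((m+1:ℕ):ℝ)+1)*θ) - Real.cos ((2*(m:ℝ)+1)*θ) := by
        have hA : (2*((m+2:ℕ):ℝ)+1) * θ = ((2*((m+1:ℕ):ℝ)+1)*θ) + 2*θ := by push_cast; ring
        have hB : (2*(m:ℝ)+1) * θ = ((2*((m+1:ℕ):ℝ)+1)*θ) - 2*θ := by push_cast; ring
        rw [hA, hB, Real.cos_add, Real.cos_sub, hcos2]; ring
      rw [key, IH1, IH0]
      -- now pure algebra
      set v : ℕ → ℝ := fun i => (1-t)^i * Real.sqrt (1-t) with hv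
      have hvs : ∀ i, v (i+1) = (1-t) * v i := by intro i; simp only [hv]; ring
      set a : ℕ → ℝ := fun i => C' (m+1) i with haa
      set b : ℕ → ℝ := fun i => C' m i with hbb
      have hpa : ∑ i ∈ Finset.range (m+2), a i * v i
          = ∑ i ∈ Finset.range (m+3), a i * v i := sum_pad (m+1) (m+2) (by omega) v
      have hpb : ∑ i ∈ Finset.range (m+1), b i * v i
          = ∑ i ∈ Finset.range (m+3), b i * v i := sum_pad m (m+2) (by omega) v
      rw [show m+1+1 = m+2 from rfl] at hpa ⊢
      -- LHS split
      rw [show m+2+1 = m+3 from rfl, Finset.sum_range_succ' (fun i => C' (m+2) i * v i) (m+2)]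
      have hrec : ∀ i, C' (m+2) (i+1) * v (i+1)
          = 4 * (a i * v (i+1)) - 2 * (a (i+1) * v (i+1)) - b (i+1) * v (i+1) := by
        intro i; rw [C'_rec_succ]; ring
      have hrec0 : C' (m+2) 0 * v 0 = -2 * (a 0 * v 0) - b 0 * v 0 := by
        rw [C'_rec_zero]; ring
      simp only [hrec, hrec0]
      rw [Finset.sum_sub_distrib, Finset.sum_sub_distrib]
      rw [← Finset.mul_sum, ← Finset.mul_sum]
      have h1 : ∑ i ∈ Finset.range (m+2), a i * v (i+1)
          = (1-t) * ∑ i ∈ Finset.range (m+2), a i * v i := by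
        rw [Finset.mul_sum]
        refine Finset.sum_congr rfl ?_
        intro i _; rw [hvs]; ring
      have h2 : ∑ i ∈ Finset.range (m+2), a (i+1) * v (i+1)
          = ∑ i ∈ Finset.range (m+2), a i * v i + a (m+2) * v (m+2) - a 0 * v 0 :=
        sum_shift (fun i => a i * v i) (m+2)
      have h3 : ∑ i ∈ Finset.range (m+2), b (i+1) * v (i+1)
          = ∑ i ∈ Finset.range (m+2), b i * v i + b (m+2) * v (m+2) - b 0 * v 0 :=
        sum_shift (fun i => b i * v i) (m+2)
      have ha2 : a (m+2) = 0 := C'_eq_zero (m+1) (m+2) (by omega)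
      have hb2 : b (m+2) = 0 := C'_eq_zero m (m+2) (by omega)
      have hb1 : ∑ i ∈ Finset.range (m+2), b i * v i
          = ∑ i ∈ Finset.range (m+1), b i * v i := (sum_pad m (m+1) (by omega) v).symm
      rw [h1, h2, h3, ha2, hb2, hb1]
      ring

theorem iter_deriv (m : ℕ) : ∀ k : ℕ, ∀ t ∈ Set.Ico (0:ℝ) 1,
    iteratedDerivWithin k
      (fun y : ℝ => Real.cos ((2*(m:ℝ)+1) * Real.arcsin (Real.sqrt y)))
      (Set.Ico (0:ℝ) 1) t
    = ∑ i ∈ Finset.range (m+1), C' m i * W i k * (1-t) ^ ((i:ℝ) + 1/2 - (k:ℝ)) := by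
  intro k
  induction k with
  | zero =>
    intro t ht
    have hu : (0:ℝ) < 1 - t := by linarith [ht.2]
    rw [iteratedDerivWithin_zero, identity m t ht]
    refine Finset.sum_congr rfl ?_
    intro i _
    have hW : W i 0 = 1 := by simp [W]
    have hexp : (1-t) ^ ((i:ℝ) + 1/2 - ((0:ℕ):ℝ)) = (1-t)^i * Real.sqrt (1-t) := by
      rw [Nat.cast_zero, sub_zero, Real.rpow_add hu, Real.rpow_natCast,
        Real.sqrt_eq_rpow]
    rw [hW, hexp]; ring
  | succ k IH =>
    intro t ht
    have hu : (0:ℝ) < 1 - t := by linarith [ht.2]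
    have hud : UniqueDiffWithinAt ℝ (Set.Ico (0:ℝ) 1) t := uniqueDiffOn_Ico 0 1 t ht
    rw [iteratedDerivWithin_succ]
    rw [derivWithin_congr (fun y hy => IH y hy) (IH t ht)]
    have hder : HasDerivAt
        (fun s : ℝ => ∑ i ∈ Finset.range (m+1), C' m i * W i k * (1-s) ^ ((i:ℝ) + 1/2 - (k:ℝ)))
        (∑ i ∈ Finset.range (m+1), C' m i * W i (k+1) * (1-t) ^ ((i:ℝ) + 1/2 - ((k:ℕ)+1:ℝ))) t := by
      refine HasDerivAt.fun_sum ?_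
      intro i _
      have h1 : HasDerivAt (fun s : ℝ => 1 - s) (-1) t := (hasDerivAt_id t).const_sub 1
      have h2 := h1.rpow_const (p := (i:ℝ) + 1/2 - (k:ℝ)) (Or.inl (ne_of_gt hu))
      have h3 := h2.const_mul (C' m i * W i k)
      refine h3.congr_deriv ?_
      rw [show W i (k+1) = W i k * ((k:ℝ) - i - 1/2) from Finset.prod_range_succ _ k,
        show (i:ℝ) + 1/2 - ((k:ℕ)+1:ℝ) = ((i:ℝ) + 1/2 - (k:ℝ)) - 1 by ring]
      ring
    rw [(hder.hasDerivWithinAt).derivWithin hud]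
    refine Finset.sum_congr rfl ?_
    intro i _
    norm_num

/-- **Sublemma 5 of the paper.** Let `n ≥ 1` and
`f(t) = cos((2n−1) arcsin √t)` on `[0,1)`. Then for every `k ≥ n` and `t ∈ [0,1)`,
`(−1)ⁿ f⁽ᵏ⁾(t) > 0`. -/
theorem cos_arcsin_sqrt_derivatives_sign
    (n : ℕ) (hn : 1 ≤ n) (k : ℕ) (hk : n ≤ k) (t : ℝ) (ht : t ∈ Set.Ico (0 : ℝ) 1) :
    0 < (-1 : ℝ) ^ n *
      iteratedDerivWithin k
        (fun y : ℝ => Real.cos ((2 * n - 1 : ℝ) * Real.arcsin (Real.sqrt y)))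
        (Set.Ico (0 : ℝ) 1) t := by
  obtain ⟨m, rfl⟩ : ∃ m, n = m + 1 := ⟨n - 1, by omega⟩
  have hu : (0:ℝ) < 1 - t := by linarith [ht.2]
  have hco : (2 * ((m+1:ℕ):ℝ) - 1) = 2 * (m:ℝ) + 1 := by push_cast; ring
  simp only [hco]
  rw [iter_deriv m k t ht, Finset.mul_sum]
  apply Finset.sum_pos
  · intro i hi
    rw [Finset.mem_range] at hi
    have hE := (E_aux m).1 i (by omega)
    have hW := W_sign i k (by omega)
    have hP := Real.rpow_pos_of_pos hu ((i:ℝ) + 1/2 - (k:ℝ))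
    have hsign : (-1:ℝ)^(m+1) * (-1:ℝ)^(m+i) = (-1)^(i+1) := by
      rw [← pow_add, show m+1+(m+i) = 2*m + (i+1) by ring, pow_add, pow_mul]
      norm_num
    have heq : (-1:ℝ)^(m+1) * (C' m i * W i k * (1-t) ^ ((i:ℝ) + 1/2 - (k:ℝ)))
        = ((-1:ℝ)^(i+1) * W i k) * (E m i * (1-t) ^ ((i:ℝ) + 1/2 - (k:ℝ))) := by
      rw [C']
      linear_combination (E m i * W i k * (1-t) ^ ((i:ℝ) + 1/2 - (k:ℝ))) * hsign
    rw [heq]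
    exact mul_pos hW (mul_pos hE hP)
  · exact ⟨0, Finset.mem_range.mpr (by omega)⟩
end
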